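/- Fix a shuffle order ⋖ on A and a colored content β (a pair of weak compositions recording multiplicities of unbarred and barred letters). The ⋖-standardization map w ↦ w^{std} — relabeling occurrences of each letter, smallest first, left-to-right for unbarred letters and right-to-left for barred letters, by consecutive integers — induces a Z-module isomorphism from the colored-content-β component of the ⋖-colored plactic algebra U/I_plac^⋖ onto the Z-span, inside the ordinary plactic algebra, of the permutations that are standardizations of colored words of colored content β. In particular, the standardization of any ⋖-colored plactic equivalence class is an ordinary Knuth equivalence class. -/

import Mathlib

open scoped BigOperators
open Classical

noncomputable section

namespace NCS

/-- A colored letter: an element of `Fin N` together with a `Bool` which is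
`true` for barred letters and `false` for unbarred letters. -/
abbrev Letter (N : ℕ) := Fin N × Bool

variable {N : ℕ}

/-- The key of the natural order `1 < 1̄ < 2 < 2̄ < ⋯ < N < N̄`. -/
def natKey (x : Letter N) : ℕ := 2 * x.1.val + (if x.2 then 1 else 0)

/-- The key of the big bar order `1 ≺ ⋯ ≺ N ≺ 1̄ ≺ ⋯ ≺ N̄`. -/
def barKey (N : ℕ) (x : Letter N) : ℕ := if x.2 then N + x.1.val else x.1.val

/-- A shuffle order on the alphabet, encoded by an injective key function which is
increasing on unbarred letters and on barred letters. -/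
def IsShuffleKey (key : Letter N → ℕ) : Prop :=
  Function.Injective key ∧
  (∀ a b : Fin N, a < b → key (a, false) < key (b, false)) ∧
  (∀ a b : Fin N, a < b → key (a, true) < key (b, true))

/-- The free associative `ℤ`-algebra on the alphabet. -/
abbrev FA (N : ℕ) := MonoidAlgebra ℤ (FreeMonoid (Letter N))

/-- The monomial of a colored word. -/
def wrd (w : List (Letter N)) : FA N := MonoidAlgebra.single (FreeMonoid.ofList w) 1

/-- `y ≥' x` : `y > x`, or `y` and `x` are equal barred letters. -/
def colGE (key : Letter N → ℕ) (y x : Letter N) : Prop :=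
  key x < key y ∨ (y = x ∧ y.2 = true)

/-- `y ≤'' z` : `y < z`, or `y` and `z` are equal unbarred letters. -/
def rowLE (key : Letter N → ℕ) (y z : Letter N) : Prop :=
  key y < key z ∨ (y = z ∧ y.2 = false)

/-- `x ≤col y` : `x < y`, or `x` and `y` are equal barred letters. -/
def colLE (key : Letter N → ℕ) (x y : Letter N) : Prop :=
  key x < key y ∨ (x = y ∧ x.2 = true)

/-- The noncommutative super elementary symmetric function `e_k(S)` with letters
restricted to the set `S`. -/
def eSet (key : Letter N → ℕ) (S : Set (Letter N)) (k : ℕ) : FA N :=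
  ∑ f ∈ (Finset.univ : Finset (Fin k → Letter N)).filter
      (fun f => (∀ i, f i ∈ S) ∧ ∀ i j : Fin k, (j : ℕ) = (i : ℕ) + 1 → colGE key (f i) (f j)),
    wrd (List.ofFn f)

/-- The noncommutative super elementary symmetric function `e_k(u)`. -/
def eU (key : Letter N → ℕ) (k : ℕ) : FA N := eSet key Set.univ k

/-- `e_k(u)` with integer index; `0` for negative `k`. -/
def eZ (key : Letter N → ℕ) (k : ℤ) : FA N := if 0 ≤ k then eU key k.toNat else 0

/-- `e_k(S)` with integer index; `0` for negative `k`. -/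
def eSetZ (key : Letter N → ℕ) (S : Set (Letter N)) (k : ℤ) : FA N :=
  if 0 ≤ k then eSet key S k.toNat else 0

/-- The noncommutative super homogeneous symmetric function `h_k(u)`. -/
def hU (key : Letter N → ℕ) (k : ℕ) : FA N :=
  ∑ f ∈ (Finset.univ : Finset (Fin k → Letter N)).filter
      (fun f => ∀ i j : Fin k, (j : ℕ) = (i : ℕ) + 1 → rowLE key (f i) (f j)),
    wrd (List.ofFn f)

/-- The relations generating the two-sided ideal `I_Kron` (with respect to the
natural order; recall `natKey x + 1 = natKey y` says `x = y↓`). -/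
inductive kronRel (N : ℕ) : FA N → FA N → Prop
  | rel3 (x y : Letter N) (hy : y.2 = false) (h : natKey x < natKey y) :
      kronRel N (wrd [y, y, x]) (wrd [y, x, y])
  | rel3b (y z : Letter N) (hy : y.2 = false) (h : natKey y < natKey z) :
      kronRel N (wrd [z, y, y]) (wrd [y, z, y])
  | rel4 (y z : Letter N) (hy : y.2 = true) (h : natKey y < natKey z) :
      kronRel N (wrd [y, y, z]) (wrd [y, z, y])
  | rel4b (x y : Letter N) (hy : y.2 = true) (h : natKey x < natKey y) :
      kronRel N (wrd [x, y, y]) (wrd [y, x, y])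
  | rot (x y z : Letter N) (h1 : natKey x + 1 = natKey y) (h2 : natKey y + 1 = natKey z) :
      kronRel N (wrd [x, z, y] - wrd [z, x, y]) (wrd [y, x, z] - wrd [y, z, x])
  | far (x z : Letter N) (h : natKey x + 2 < natKey z) :
      kronRel N (wrd [x, z]) (wrd [z, x])

/-- The relations generating the ⋖-colored plactic ideal `I_plac^⋖`. -/
inductive placRel (N : ℕ) (key : Letter N → ℕ) : FA N → FA N → Prop
  | k1 (x y z : Letter N) (h1 : key x < key y) (h2 : key y < key z) :
      placRel N key (wrd [x, z, y]) (wrd [z, x, y])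
  | k2 (x y z : Letter N) (h1 : key x < key y) (h2 : key y < key z) :
      placRel N key (wrd [y, x, z]) (wrd [y, z, x])
  | k3 (x y : Letter N) (hy : y.2 = false) (h : key x < key y) :
      placRel N key (wrd [y, y, x]) (wrd [y, x, y])
  | k3b (y z : Letter N) (hy : y.2 = false) (h : key y < key z) :
      placRel N key (wrd [z, y, y]) (wrd [y, z, y])
  | k4 (y z : Letter N) (hy : y.2 = true) (h : key y < key z) :
      placRel N key (wrd [y, y, z]) (wrd [y, z, y])
  | k4b (x y : Letter N) (hy : y.2 = true) (h : key x < key y) :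
      placRel N key (wrd [x, y, y]) (wrd [y, x, y])

/-- The relations generating the ideal `I_kronknuth`. -/
inductive kkRel (N : ℕ) : FA N → FA N → Prop
  | rel3 (x y : Letter N) (hy : y.2 = false) (h : natKey x < natKey y) :
      kkRel N (wrd [y, y, x]) (wrd [y, x, y])
  | rel3b (y z : Letter N) (hy : y.2 = false) (h : natKey y < natKey z) :
      kkRel N (wrd [z, y, y]) (wrd [y, z, y])
  | rel4 (y z : Letter N) (hy : y.2 = true) (h : natKey y < natKey z) :
      kkRel N (wrd [y, y, z]) (wrd [y, z, y])
  | rel4b (x y : Letter N) (hy : y.2 = true) (h : natKey x < natKey y) :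
      kkRel N (wrd [x, y, y]) (wrd [y, x, y])
  | rot (x y z : Letter N) (h1 : natKey x + 1 = natKey y) (h2 : natKey y + 1 = natKey z) :
      kkRel N (wrd [x, z, y] - wrd [z, x, y]) (wrd [y, x, z] - wrd [y, z, x])
  | kk1 (x y z : Letter N) (h1 : natKey x < natKey y) (h2 : natKey y < natKey z)
      (h3 : natKey x + 2 < natKey z) :
      kkRel N (wrd [x, z, y]) (wrd [z, x, y])
  | kk2 (x y z : Letter N) (h1 : natKey x < natKey y) (h2 : natKey y < natKey z)
      (h3 : natKey x + 2 < natKey z) :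
      kkRel N (wrd [y, x, z]) (wrd [y, z, x])

end NCS
namespace NCS

variable {N : ℕ}

/-- The ordinary word `w^r`: barred letters shuffled to the right, that subword
reversed and de-barred.  Letters are recorded `1`-indexed. -/
def plainr (w : List (Letter N)) : List ℕ :=
  (w.filter (fun x => !x.2)).map (fun x => x.1.val + 1) ++
    ((w.filter (fun x => x.2)).reverse).map (fun x => x.1.val + 1)

/-- The number of barred letters of a colored word. -/
def barredCount (w : List (Letter N)) : ℕ := (w.filter (fun x => x.2)).length

/-- An ordinary word (in the `1`-indexed alphabet) is Yamanouchi of content `lam`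
(`lam i` = multiplicity of the letter `i+1`). -/
def IsYamOf (lam : ℕ → ℕ) (u : List ℕ) : Prop :=
  (∀ i : ℕ, u.count (i + 1) = lam i) ∧
    ∀ t i : ℕ, (u.drop t).count (i + 2) ≤ (u.drop t).count (i + 1)

/-- An ordinary word is Yamanouchi (of some content). -/
def IsYamWord (u : List ℕ) : Prop :=
  ∀ t i : ℕ, (u.drop t).count (i + 2) ≤ (u.drop t).count (i + 1)

/-- The set of colored Yamanouchi words of content `lam` with exactly `d` barred letters. -/
def CYW (N : ℕ) (lam : ℕ → ℕ) (d : ℕ) : Set (List (Letter N)) :=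
  {w | IsYamOf lam (plainr w) ∧ barredCount w = d}

/-- `CYW` as a finset (all its members have length `n = Σ lam`). -/
def CYWfin (N : ℕ) (lam : ℕ → ℕ) (d n : ℕ) : Finset (List (Letter N)) :=
  ((Finset.univ : Finset (Fin n → Letter N)).image List.ofFn).filter
    (fun w => w ∈ CYW N lam d)

/-- A set of colored words is shuffle closed. -/
def ShuffleClosed (W : Set (List (Letter N))) : Prop :=
  ∀ (u v : List (Letter N)) (x y : Letter N), x.2 ≠ y.2 →
    (u ++ x :: y :: v) ∈ W → (u ++ y :: x :: v) ∈ W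

/-- The ⋖-descent set of a colored word (`0`-indexed positions). -/
def DesSet (key : Letter N → ℕ) (w : List (Letter N)) : Set ℕ :=
  {i | ∃ h : i + 1 < w.length,
    key (w.get ⟨i + 1, h⟩) < key (w.get ⟨i, Nat.lt_of_succ_lt h⟩) ∨
      (w.get ⟨i, Nat.lt_of_succ_lt h⟩ = w.get ⟨i + 1, h⟩ ∧ (w.get ⟨i + 1, h⟩).2 = true)}

/-- Coefficient of the monomial `m` in Gessel's fundamental quasisymmetric
function `Q_S` for words of length `t`. -/
def Qcoeff (t : ℕ) (S : Set ℕ) (m : ℕ →₀ ℕ) : ℤ :=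
  Nat.card {i : Fin t → ℕ //
    (∀ j k : Fin t, j ≤ k → i j ≤ i k) ∧
    (∀ j k : Fin t, (k : ℕ) = (j : ℕ) + 1 → (j : ℕ) ∈ S → i j < i k) ∧
    (∀ v : ℕ, m v = (Finset.univ.filter (fun j : Fin t => i j = v)).card)}

/-- Gessel's fundamental quasisymmetric function as a power series in the
variables `x_0, x_1, …`. -/
def Qqs (t : ℕ) (S : Set ℕ) : MvPowerSeries ℕ ℤ := fun m => Qcoeff t S m

/-- The boxes of the (possibly restricted) shape with column lengths bounded by
`rows` and row lengths given by `nu`. -/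
def shapeFin (nu : ℕ → ℕ) (rows : ℕ) : Finset (ℕ × ℕ) :=
  (Finset.range rows ×ˢ Finset.range (nu 0)).filter (fun p => p.2 < nu p.1)

/-- `E` is a ⋖-colored tableau of shape `nu` (rows weakly increase with equal
letters unbarred; columns weakly increase with equal letters barred). -/
def IsCT (key : Letter N → ℕ) (nu : ℕ → ℕ) (E : ℕ × ℕ → Letter N) : Prop :=
  (∀ r c : ℕ, c + 1 < nu r → rowLE key (E (r, c)) (E (r, c + 1))) ∧
  (∀ r c : ℕ, c < nu (r + 1) → colLE key (E (r, c)) (E (r + 1, c)))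

/-- Pad a partition given on `Fin n` to a function on `ℕ`. -/
def padF {n : ℕ} (f : Fin n → ℕ) : ℕ → ℕ := fun i => if h : i < n then f ⟨i, h⟩ else 0

/-- Extend a filling of the shape to all of `ℕ × ℕ` by a junk letter. -/
def extT (nu : ℕ → ℕ) (rows : ℕ) (junk : Letter N)
    (T : {p : ℕ × ℕ // p ∈ shapeFin nu rows} → Letter N) : ℕ × ℕ → Letter N :=
  fun p => if h : p ∈ shapeFin nu rows then T ⟨p, h⟩ else junk

/-- The reading word `sqread`: diagonals from southwest to northeast; on each
diagonal the unbarred entries are read in the ↖ direction followed by the barred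
entries in the ↘ direction. -/
def sqread (nu : ℕ → ℕ) (rows : ℕ) (E : ℕ × ℕ → Letter N) : List (Letter N) :=
  (List.range (rows + nu 0)).flatMap (fun k =>
    let boxes : List (ℕ × ℕ) := (List.range rows).filterMap (fun (r : ℕ) =>
      let c : ℤ := (r : ℤ) + (k : ℤ) - (rows : ℤ) + 1
      if 0 ≤ c ∧ c.toNat < nu r then some (r, c.toNat) else none)
    ((boxes.filter (fun b => !(E b).2)).reverse ++ boxes.filter (fun b => (E b).2)).map E)

/-- The column reading word: columns read bottom to top, leftmost column first. -/
def colword (nu : ℕ → ℕ) (rows : ℕ) (E : ℕ × ℕ → Letter N) : List (Letter N) :=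
  (List.range (nu 0)).flatMap (fun c =>
    ((List.range rows).filter (fun r => decide (c < nu r))).reverse.map (fun r => E (r, c)))

/-- The Kostka number: semistandard Young tableaux of shape `nu` and content `m`
(entries `1`-indexed; entry `i+1` corresponds to the variable `x_i`). -/
def kostka (nu : ℕ → ℕ) (m : ℕ →₀ ℕ) : ℤ :=
  Nat.card {T : ℕ × ℕ → ℕ //
    (∀ r c : ℕ, c + 1 < nu r → T (r, c) ≤ T (r, c + 1)) ∧
    (∀ r c : ℕ, c < nu (r + 1) → T (r, c) < T (r + 1, c)) ∧
    (∀ r c : ℕ, c < nu r → 1 ≤ T (r, c)) ∧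
    (∀ r c : ℕ, ¬ c < nu r → T (r, c) = 0) ∧
    (∀ i : ℕ, (m i : ℕ) = Nat.card {p : ℕ × ℕ // p.2 < nu p.1 ∧ T p = i + 1})}

/-- The parts of a partition of `n`, as a weakly decreasing list. -/
def partList {n : ℕ} (ν : Nat.Partition n) : List ℕ := (ν.parts.sort (· ≤ ·)).reverse

/-- The parts of a partition of `n`, as a function `ℕ → ℕ` (`0`-indexed). -/
def partFun {n : ℕ} (ν : Nat.Partition n) : ℕ → ℕ := fun i => (partList ν).getD i 0

/-- The conjugate partition: `ν'_j = #{i < rows : ν_i ≥ j}`. -/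
def conjP (nu : ℕ → ℕ) (j : ℕ) (rows : ℕ) : ℕ :=
  ((Finset.range rows).filter (fun i => j ≤ nu i)).card

/-- The noncommutative super Schur function
`𝔍_ν(u) = Σ_{π ∈ S_t} sgn(π) e_{ν'_1+π(1)-1}(u) ⋯ e_{ν'_t+π(t)-t}(u)`, `t = ν_1`. -/
def JncF (key : Letter N → ℕ) (nu : ℕ → ℕ) (rows : ℕ) : FA N :=
  ∑ π : Equiv.Perm (Fin (nu 0)),
    (Equiv.Perm.sign π : ℤ) •
      (List.ofFn (fun i : Fin (nu 0) =>
        eZ key ((conjP nu (i.1 + 1) rows : ℤ) + ((π i).1 : ℤ) - (i.1 : ℤ)))).prod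

end NCS
namespace NCS

variable {N : ℕ}

/-- A partition diagram (as a set of `0`-indexed boxes). -/
def IsPartitionDiagram (P : Finset (ℕ × ℕ)) : Prop :=
  ∀ p ∈ P, ∀ q : ℕ × ℕ, q.1 ≤ p.1 → q.2 ≤ p.2 → q ∈ P

/-- `p ≤ q` in the northeast order: `q.1 ≤ p.1` and `p.2 ≤ q.2`. -/
def neLE (p q : ℕ × ℕ) : Prop := q.1 ≤ p.1 ∧ p.2 ≤ q.2

/-- A restricted shape: a lower order ideal of a partition diagram for the
northeast order. -/
def IsRestrictedShape (D : Finset (ℕ × ℕ)) : Prop :=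
  ∃ P : Finset (ℕ × ℕ), IsPartitionDiagram P ∧ D ⊆ P ∧
    ∀ p ∈ P, ∀ q ∈ D, neLE p q → p ∈ D

/-- A restricted colored tableau (for the natural order). -/
structure RCT (N : ℕ) where
  shape : Finset (ℕ × ℕ)
  restricted : IsRestrictedShape shape
  entry : ℕ × ℕ → Letter N
  row : ∀ r c : ℕ, (r, c) ∈ shape → (r, c + 1) ∈ shape →
    natKey (entry (r, c)) < natKey (entry (r, c + 1)) ∨
      (entry (r, c) = entry (r, c + 1) ∧ (entry (r, c)).2 = false)
  col : ∀ r c : ℕ, (r, c) ∈ shape → (r + 1, c) ∈ shape →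
    natKey (entry (r, c)) < natKey (entry (r + 1, c)) ∨
      (entry (r, c) = entry (r + 1, c) ∧ (entry (r, c)).2 = true)

/-- A ↖ arrow of `R` from the box `tail` (containing `a+1`) to the box `head`
(containing `a`); the two boxes are opposite corners of a rectangle whose
intersection with the shape is an arrow subtableau. -/
def nwArrow (R : RCT N) (tail head : ℕ × ℕ) : Prop :=
  head ∈ R.shape ∧ tail ∈ R.shape ∧ head.1 < tail.1 ∧ head.2 < tail.2 ∧
  (∃ a b : Fin N, R.entry head = (a, false) ∧ R.entry tail = (b, false) ∧
    (b : ℕ) = (a : ℕ) + 1) ∧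
  ((tail.1 = head.1 + 1 ∧ tail.2 = head.2 + 1 ∧ (tail.1, head.2) ∈ R.shape) ∨
   (head.1 + 1 < tail.1 ∧
    (∀ p ∈ R.shape, head.1 ≤ p.1 → p.1 ≤ tail.1 → head.2 ≤ p.2 → p.2 ≤ tail.2 →
      p.2 = head.2 ∨ p.1 = tail.1) ∧
    (∀ r : ℕ, head.1 ≤ r → r ≤ tail.1 → (r, head.2) ∈ R.shape) ∧
    (∀ c : ℕ, head.2 ≤ c → c ≤ tail.2 → (tail.1, c) ∈ R.shape)))

/-- A ↘ arrow of `R` from the box `tail` (containing `ā`) to the box `head`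
(containing `(a+1)`-bar). -/
def seArrow (R : RCT N) (tail head : ℕ × ℕ) : Prop :=
  tail ∈ R.shape ∧ head ∈ R.shape ∧ tail.1 < head.1 ∧ tail.2 < head.2 ∧
  (∃ a b : Fin N, R.entry tail = (a, true) ∧ R.entry head = (b, true) ∧
    (b : ℕ) = (a : ℕ) + 1) ∧
  ((head.1 = tail.1 + 1 ∧ head.2 = tail.2 + 1 ∧ (head.1, tail.2) ∈ R.shape) ∨
   (tail.2 + 1 < head.2 ∧
    (∀ p ∈ R.shape, tail.1 ≤ p.1 → p.1 ≤ head.1 → tail.2 ≤ p.2 → p.2 ≤ head.2 →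
      p.2 = tail.2 ∨ p.1 = head.1) ∧
    (∀ r : ℕ, tail.1 ≤ r → r ≤ head.1 → (r, tail.2) ∈ R.shape) ∧
    (∀ c : ℕ, tail.2 ≤ c → c ≤ head.2 → (head.1, c) ∈ R.shape)))

/-- A box is the tail of an arrow of `R`. -/
def IsArrowTail (R : RCT N) (β : ℕ × ℕ) : Prop :=
  (∃ h, nwArrow R β h) ∨ (∃ h, seArrow R β h)

/-- A box which is maximal in `D` for the northeast order. -/
def NEMaximal (D : Finset (ℕ × ℕ)) (β : ℕ × ℕ) : Prop :=
  β ∈ D ∧ ∀ q ∈ D, neLE β q → q = β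

/-- `L` is an arrow respecting reading order of the RCT `R`: an enumeration of
the boxes compatible with the northeast order, reading every arrow tail before
the corresponding head. -/
def IsARWord (R : RCT N) (L : List (ℕ × ℕ)) : Prop :=
  L.Nodup ∧ (∀ β : ℕ × ℕ, β ∈ L ↔ β ∈ R.shape) ∧
  (∀ β β' : ℕ × ℕ, β ∈ L → β' ∈ L → neLE β β' → β ≠ β' →
    L.idxOf β < L.idxOf β') ∧
  (∀ t h : ℕ × ℕ, nwArrow R t h ∨ seArrow R t h → L.idxOf t < L.idxOf h)

end NCS
namespace NCS

variable {N : ℕ}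

/-! ### Word conversion -/

/-- Rotate a list once to the right. -/
def rotR {α : Type*} (l : List α) : List α := l.rotate (l.length - 1)

/-- Word conversion: fix all letters not satisfying `p` and rotate each maximal
consecutive run of letters satisfying `p` once to the right. -/
def conv {α : Type*} (p : α → Bool) : List α → List α
  | [] => []
  | x :: xs =>
    if p x = true then
      rotR ((x :: xs).takeWhile p) ++ conv p (xs.dropWhile p)
    else x :: conv p xs
termination_by l => l.length
decreasing_by
  · exact Nat.lt_succ_of_le ((List.dropWhile_suffix p).length_le)
  · exact Nat.lt_succ_self _

/-! ### Ordinary RSK insertion -/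

/-- Row bumping: insert `x` into a weakly increasing row, bumping the leftmost
entry strictly greater than `x`. -/
def bumpRow : List ℕ → ℕ → List ℕ × Option ℕ
  | [], x => ([x], none)
  | y :: ys, x =>
    if x < y then (x :: ys, some y)
    else
      let p := bumpRow ys x
      (y :: p.1, p.2)

/-- Schensted insertion of a letter into a tableau (given as its list of rows). -/
def insertEntry : List (List ℕ) → ℕ → List (List ℕ)
  | [], x => [[x]]
  | row :: rest, x =>
    match bumpRow row x with
    | (row', none) => row' :: rest
    | (row', some y) => row' :: insertEntry rest y

/-- The insertion tableau of an ordinary word. -/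
def insertionTableau (w : List ℕ) : List (List ℕ) := w.foldl insertEntry []

/-- A tableau (list of rows) is superstandard: row `i` is filled with `i+1`'s
(`1`-indexed letters). -/
def IsSuperstandard (Q : List (List ℕ)) : Prop :=
  ∀ i : ℕ, ∀ h : i < Q.length, ∀ v ∈ Q.get ⟨i, h⟩, v = i + 1

/-! ### Standardization -/

/-- The ⋖-standardization of a colored word: occurrences of each letter are
relabelled, smallest letter first, left to right for unbarred letters and
right to left for barred letters, by `1, 2, …`. -/
def stdz (key : Letter N → ℕ) (w : List (Letter N)) : List ℕ :=
  (List.finRange w.length).map (fun i =>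
    ((List.finRange w.length).filter
        (fun j => decide (key (w.get j) < key (w.get i)))).length +
    (if (w.get i).2 then
        ((List.finRange w.length).filter
          (fun j => decide (i < j ∧ w.get j = w.get i))).length
      else
        ((List.finRange w.length).filter
          (fun j => decide (j < i ∧ w.get j = w.get i))).length) + 1)

/-- The free `ℤ`-algebra on the ordinary (unbarred) alphabet `ℕ`. -/
abbrev FAO := MonoidAlgebra ℤ (FreeMonoid ℕ)

/-- The monomial of an ordinary word. -/
def wrdO (w : List ℕ) : FAO := MonoidAlgebra.single (FreeMonoid.ofList w) 1

/-- The ordinary Knuth (plactic) relations. -/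
inductive knuthRel : FAO → FAO → Prop
  | k1 (a b c : ℕ) (h1 : a < b) (h2 : b < c) : knuthRel (wrdO [a, c, b]) (wrdO [c, a, b])
  | k2 (a b c : ℕ) (h1 : a < b) (h2 : b < c) : knuthRel (wrdO [b, a, c]) (wrdO [b, c, a])
  | k3 (a b : ℕ) (h : a < b) : knuthRel (wrdO [b, b, a]) (wrdO [b, a, b])
  | k4 (b c : ℕ) (h : b < c) : knuthRel (wrdO [c, b, b]) (wrdO [b, c, b])

/-! ### Pairing, the noncommutative Cauchy product, symmetric series -/

/-- The bilinear pairing on `U` for which the colored words are orthonormal. -/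
def pairU (f g : FA N) : ℤ := ∑ w ∈ f.coeff.support, f.coeff w * g.coeff w

/-- Coefficient of `x^m` in the noncommutative Cauchy product
`Ω(x,u) = Π_j (c_{z_1}(x_j) ⋯ c_{z_{2N}}(x_j))`: the product of the `h_{m_j}(u)`
in increasing order of `j`. -/
def OmegaC (key : Letter N → ℕ) (m : ℕ →₀ ℕ) : FA N :=
  ((m.support.sort (· ≤ ·)).map (fun j => hU key (m j))).prod

/-- Total degree of a monomial. -/
def degM (m : ℕ →₀ ℕ) : ℕ := m.sum fun _ k => k

/-- Coefficient of `x^m` in the monomial symmetric function `m_ν`. -/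
def mCoeff {k : ℕ} (ν : Nat.Partition k) (m : ℕ →₀ ℕ) : ℤ :=
  if Multiset.map (fun j => m j) m.support.val = ν.parts then 1 else 0

/-- `h_ν(u) = h_{ν_1}(u) h_{ν_2}(u) ⋯`. -/
def hProd (key : Letter N → ℕ) (L : List ℕ) : FA N := (L.map (hU key)).prod

/-- Coefficient of `x^m` in `F_γ(x) = Σ_w γ_w Q_{Des(w)}(x)`. -/
def FgammaC (key : Letter N → ℕ) (γ : FA N) (m : ℕ →₀ ℕ) : ℤ :=
  ∑ w ∈ γ.coeff.support, γ.coeff w *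
    Qcoeff (FreeMonoid.toList w).length (DesSet key (FreeMonoid.toList w)) m

/-- A series (given by its coefficients) is symmetric. -/
def SymmSeries (F : (ℕ →₀ ℕ) → ℤ) : Prop :=
  ∀ σ : Equiv.Perm ℕ, ∀ m : ℕ →₀ ℕ, F (Finsupp.mapDomain σ m) = F m

/-! ### Characters of symmetric groups and Kronecker coefficients -/

/-- The power sum polynomial `p_k` in `n` variables. -/
def powS (n k : ℕ) : MvPolynomial (Fin n) ℤ := ∑ j : Fin n, MvPolynomial.X j ^ k

/-- The Vandermonde alternant `a_δ = Σ_σ sgn(σ) Π_i x_{σ(i)}^{n-1-i}`. -/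
def aDelta (n : ℕ) : MvPolynomial (Fin n) ℤ :=
  ∑ σ : Equiv.Perm (Fin n),
    (Equiv.Perm.sign σ : ℤ) • ∏ i : Fin n, MvPolynomial.X (σ i) ^ (n - 1 - (i : ℕ))

/-- The irreducible character `χ^λ` of `S_n` evaluated at `σ`, via the Frobenius
character formula: the coefficient of `x^{λ+δ}` in `a_δ · p_{cycleType σ}`. -/
def chi (n : ℕ) (lam : Fin n → ℕ) (σ : Equiv.Perm (Fin n)) : ℤ :=
  MvPolynomial.coeff
    (Finsupp.equivFunOnFinite.symm (fun i : Fin n => lam i + (n - 1 - (i : ℕ))))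
    (aDelta n * (σ.cycleType.map (fun k => powS n k)).prod)

/-- The hook partition `μ(d) = (n-d, 1^d)`, as a function on `Fin n`. -/
def hookP (n d : ℕ) : Fin n → ℕ :=
  fun i => if (i : ℕ) = 0 then n - d else if (i : ℕ) ≤ d then 1 else 0

/-- `n!` times the Kronecker coefficient `g_{λμν}`, via
`g = (1/n!) Σ_σ χ^λ(σ) χ^μ(σ) χ^ν(σ)`. -/
def kronC (n : ℕ) (lam mu nu : Fin n → ℕ) : ℤ :=
  ∑ σ : Equiv.Perm (Fin n), chi n lam σ * chi n mu σ * chi n nu σ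

/-! ### Power series in `s` and `t` over `U/I_kronknuth` -/

/-- The quotient `U/I_kronknuth`. -/
abbrev QKK (N : ℕ) := RingQuot (kkRel N)

/-- The image of a generator in `U/I_kronknuth`. -/
def uQ (x : Letter N) : QKK N := RingQuot.mkRingHom (kkRel N) (wrd [x])

/-- A power series in `s` (variable `0`) only. -/
def serS (c : ℕ → QKK N) : MvPowerSeries (Fin 2) (QKK N) :=
  fun m => if m 1 = 0 then c (m 0) else 0

/-- A power series in `t` (variable `1`) only. -/
def serT (c : ℕ → QKK N) : MvPowerSeries (Fin 2) (QKK N) :=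
  fun m => if m 0 = 0 then c (m 1) else 0

/-- A constant power series. -/
def constSer (a : QKK N) : MvPowerSeries (Fin 2) (QKK N) :=
  fun m => if m = 0 then a else 0

/-- `f_x = 1 + u_x s` (`x` unbarred), `(1 - u_x s)⁻¹ = Σ_k u_x^k s^k` (`x` barred). -/
def fSer (x : Letter N) : MvPowerSeries (Fin 2) (QKK N) :=
  serS (fun k => if x.2 then uQ x ^ k else if k = 0 then 1 else if k = 1 then uQ x else 0)

/-- The inverse of `f_x`. -/
def fSerInv (x : Letter N) : MvPowerSeries (Fin 2) (QKK N) :=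
  serS (fun k => if x.2 then (if k = 0 then 1 else if k = 1 then -uQ x else 0)
    else (-uQ x) ^ k)

/-- `g_z = 1 + u_z t` (`z` unbarred), `(1 - u_z t)⁻¹` (`z` barred). -/
def gSer (z : Letter N) : MvPowerSeries (Fin 2) (QKK N) :=
  serT (fun k => if z.2 then uQ z ^ k else if k = 0 then 1 else if k = 1 then uQ z else 0)

/-- The inverse of `g_z`. -/
def gSerInv (z : Letter N) : MvPowerSeries (Fin 2) (QKK N) :=
  serT (fun k => if z.2 then (if k = 0 then 1 else if k = 1 then -uQ z else 0)
    else (-uQ z) ^ k)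

end NCS
namespace NCS

variable {N : ℕ}

/-! ### auxiliary label function -/

def labL (key : Letter N → ℕ) (w : List (Letter N)) (i : Fin w.length) : ℕ :=
  (Finset.univ.filter (fun j : Fin w.length => key (w.get j) < key (w.get i))).card +
  (if (w.get i).2 then
      (Finset.univ.filter (fun j : Fin w.length => i < j ∧ w.get j = w.get i)).card
    else
      (Finset.univ.filter (fun j : Fin w.length => j < i ∧ w.get j = w.get i)).card) + 1

lemma length_filter_finRange {n : ℕ} (P : Fin n → Prop) [DecidablePred P] :
    ((List.finRange n).filter (fun j => decide (P j))).length =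
      (Finset.univ.filter P).card := by
  classical
  rw [← List.toFinset_card_of_nodup ((List.nodup_finRange n).filter _)]
  rw [List.toFinset_filter, List.toFinset_finRange]
  congr 1
  apply Finset.filter_congr
  intro x _
  simp

lemma stdz_eq_ofFn (key : Letter N → ℕ) (w : List (Letter N)) :
    stdz key w = List.ofFn (labL key w) := by
  rw [List.ofFn_eq_map]
  unfold stdz labL
  apply List.map_congr_left
  intro i _
  rw [length_filter_finRange]
  split <;> rw [length_filter_finRange]

lemma stdz_length (key : Letter N → ℕ) (w : List (Letter N)) :
    (stdz key w).length = w.length := by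
  rw [stdz_eq_ofFn]; simp

lemma stdz_getElem (key : Letter N → ℕ) (w : List (Letter N)) (k : ℕ)
    (hk : k < (stdz key w).length) (hk' : k < w.length) :
    (stdz key w)[k] = labL key w ⟨k, hk'⟩ := by
  simp only [stdz_eq_ofFn] at hk ⊢
  rw [List.getElem_ofFn]


section LabelFacts

variable {key : Letter N → ℕ} {w : List (Letter N)}

lemma lab_lt_of_key_lt {i j : Fin w.length} (h : key (w.get i) < key (w.get j)) :
    labL key w i < labL key w j := by
  classical
  have hdisj : Disjoint
      (Finset.univ.filter (fun j' : Fin w.length => key (w.get j') < key (w.get i)))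
      (Finset.univ.filter (fun j' : Fin w.length => w.get j' = w.get i)) := by
    rw [Finset.disjoint_left]
    intro a ha hb
    simp only [Finset.mem_filter, Finset.mem_univ, true_and] at ha hb
    rw [hb] at ha
    omega
  have hsub : (Finset.univ.filter (fun j' : Fin w.length => key (w.get j') < key (w.get i))) ∪
      (Finset.univ.filter (fun j' : Fin w.length => w.get j' = w.get i)) ⊆
      (Finset.univ.filter (fun j' : Fin w.length => key (w.get j') < key (w.get j))) := by
    intro a ha
    simp only [Finset.mem_union, Finset.mem_filter, Finset.mem_univ, true_and] at ha ⊢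
    rcases ha with h1 | h1
    · omega
    · rw [h1]; exact h
  have hcard : (Finset.univ.filter (fun j' : Fin w.length => key (w.get j') < key (w.get i))).card
      + (Finset.univ.filter (fun j' : Fin w.length => w.get j' = w.get i)).card
      ≤ (Finset.univ.filter (fun j' : Fin w.length => key (w.get j') < key (w.get j))).card := by
    rw [← Finset.card_union_of_disjoint hdisj]
    exact Finset.card_le_card hsub
  have hBi : (if (w.get i).2 then
      (Finset.univ.filter (fun j' : Fin w.length => i < j' ∧ w.get j' = w.get i)).card
    else
      (Finset.univ.filter (fun j' : Fin w.length => j' < i ∧ w.get j' = w.get i)).card) + 1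
      ≤ (Finset.univ.filter (fun j' : Fin w.length => w.get j' = w.get i)).card := by
    have hi : i ∈ Finset.univ.filter (fun j' : Fin w.length => w.get j' = w.get i) := by
      simp
    have herase : ∀ s : Finset (Fin w.length),
        s ⊆ (Finset.univ.filter (fun j' : Fin w.length => w.get j' = w.get i)).erase i →
        s.card + 1 ≤ (Finset.univ.filter (fun j' : Fin w.length => w.get j' = w.get i)).card := by
      intro s hs
      have := Finset.card_le_card hs
      have := Finset.card_erase_add_one hi
      omega
    split
    · apply herase
      intro a ha
      simp only [Finset.mem_filter, Finset.mem_univ, true_and] at ha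
      simp only [Finset.mem_erase, Finset.mem_filter, Finset.mem_univ, true_and]
      exact ⟨fun he => absurd he.symm (ne_of_lt ha.1), ha.2⟩
    · apply herase
      intro a ha
      simp only [Finset.mem_filter, Finset.mem_univ, true_and] at ha
      simp only [Finset.mem_erase, Finset.mem_filter, Finset.mem_univ, true_and]
      exact ⟨fun he => absurd he (ne_of_lt ha.1), ha.2⟩
  unfold labL
  omega

lemma lab_lt_same_unbarred {i j : Fin w.length} (hw : w.get i = w.get j)
    (hb : (w.get i).2 = false) (hij : i < j) :
    labL key w i < labL key w j := by
  classical
  have hA : (Finset.univ.filter (fun j' : Fin w.length => key (w.get j') < key (w.get i)))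
      = (Finset.univ.filter (fun j' : Fin w.length => key (w.get j') < key (w.get j))) := by
    rw [hw]
  have hbj : (w.get j).2 = false := by rw [← hw]; exact hb
  have hB : (Finset.univ.filter (fun j' : Fin w.length => j' < i ∧ w.get j' = w.get i)).card + 1
      ≤ (Finset.univ.filter (fun j' : Fin w.length => j' < j ∧ w.get j' = w.get j)).card := by
    have hins : insert i (Finset.univ.filter (fun j' : Fin w.length => j' < i ∧ w.get j' = w.get i))
        ⊆ (Finset.univ.filter (fun j' : Fin w.length => j' < j ∧ w.get j' = w.get j)) := by
      intro a ha
      simp only [Finset.mem_insert, Finset.mem_filter, Finset.mem_univ, true_and] at ha ⊢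
      rcases ha with rfl | ⟨h1, h2⟩
      · exact ⟨hij, hw⟩
      · exact ⟨lt_trans h1 hij, h2.trans hw⟩
    have hnm : i ∉ (Finset.univ.filter (fun j' : Fin w.length => j' < i ∧ w.get j' = w.get i)) := by
      simp
    have := Finset.card_le_card hins
    rw [Finset.card_insert_of_notMem hnm] at this
    omega
  unfold labL
  rw [hA, if_neg (by simpa using hb), if_neg (by simpa using hbj)]
  omega

lemma lab_lt_same_barred {i j : Fin w.length} (hw : w.get i = w.get j)
    (hb : (w.get i).2 = true) (hij : i < j) :
    labL key w j < labL key w i := by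
  classical
  have hA : (Finset.univ.filter (fun j' : Fin w.length => key (w.get j') < key (w.get j)))
      = (Finset.univ.filter (fun j' : Fin w.length => key (w.get j') < key (w.get i))) := by
    rw [hw]
  have hbj : (w.get j).2 = true := by rw [← hw]; exact hb
  have hB : (Finset.univ.filter (fun j' : Fin w.length => j < j' ∧ w.get j' = w.get j)).card + 1
      ≤ (Finset.univ.filter (fun j' : Fin w.length => i < j' ∧ w.get j' = w.get i)).card := by
    have hins : insert j (Finset.univ.filter (fun j' : Fin w.length => j < j' ∧ w.get j' = w.get j))
        ⊆ (Finset.univ.filter (fun j' : Fin w.length => i < j' ∧ w.get j' = w.get i)) := by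
      intro a ha
      simp only [Finset.mem_insert, Finset.mem_filter, Finset.mem_univ, true_and] at ha ⊢
      rcases ha with rfl | ⟨h1, h2⟩
      · exact ⟨hij, hw.symm⟩
      · exact ⟨lt_trans hij h1, h2.trans hw.symm⟩
    have hnm : j ∉ (Finset.univ.filter (fun j' : Fin w.length => j < j' ∧ w.get j' = w.get j)) := by
      simp
    have := Finset.card_le_card hins
    rw [Finset.card_insert_of_notMem hnm] at this
    omega
  unfold labL
  rw [hA, if_pos (by simpa using hbj), if_pos (by simpa using hb)]
  omega

lemma lab_inj (hkey : Function.Injective key) {i j : Fin w.length}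
    (h : labL key w i = labL key w j) : i = j := by
  by_contra hne
  rcases lt_trichotomy (key (w.get i)) (key (w.get j)) with hlt | heq | hgt
  · exact absurd h (ne_of_lt (lab_lt_of_key_lt hlt))
  · have hww : w.get i = w.get j := hkey heq
    rcases lt_or_gt_of_ne hne with hij | hji
    · cases hbv : (w.get i).2
      · exact absurd h (ne_of_lt (lab_lt_same_unbarred hww hbv hij))
      · exact absurd h.symm (ne_of_lt (lab_lt_same_barred hww hbv hij))
    · cases hbv : (w.get j).2
      · exact absurd h.symm (ne_of_lt (lab_lt_same_unbarred hww.symm hbv hji))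
      · exact absurd h (ne_of_lt (lab_lt_same_barred hww.symm hbv hji))
  · exact absurd h.symm (ne_of_lt (lab_lt_of_key_lt hgt))

lemma key_cases (hkey : Function.Injective key) {i j : Fin w.length}
    (h : labL key w i < labL key w j) :
    key (w.get i) < key (w.get j) ∨ w.get i = w.get j := by
  rcases lt_trichotomy (key (w.get i)) (key (w.get j)) with hlt | heq | hgt
  · exact Or.inl hlt
  · exact Or.inr (hkey heq)
  · exact absurd (lab_lt_of_key_lt hgt) (by omega)

end LabelFacts

section Swap

variable {α : Type*}

def nswap (t k : ℕ) : ℕ := if k = t then t+1 else if k = t+1 then t else k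

lemma nswap_nswap (t k : ℕ) : nswap t (nswap t k) = k := by
  unfold nswap; split_ifs <;> omega

lemma getElem_mid0 (p q : List α) (a b : α) (h : p.length < (p++a::b::q).length) :
    (p++a::b::q)[p.length] = a := by
  rw [List.getElem_append_right le_rfl]
  simp

lemma getElem_mid1 (p q : List α) (a b : α) (h : p.length + 1 < (p++a::b::q).length) :
    (p++a::b::q)[p.length + 1] = b := by
  rw [List.getElem_append_right (by omega)]
  simp [show p.length + 1 - p.length = 1 from by omega]

lemma getElem_two_right (p q : List α) (a b : α) (m : ℕ)
    (hk : p.length + 2 + m < (p++a::b::q).length) (hq : m < q.length) :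
    (p++a::b::q)[p.length + 2 + m] = q[m] := by
  rw [List.getElem_append_right (by omega)]
  simp only [show p.length + 2 + m - p.length = m + 1 + 1 from by omega,
    List.getElem_cons_succ]

lemma length_swap_shape (p q : List α) (x z : α) :
    (p++z::x::q).length = (p++x::z::q).length := by simp

lemma nswap_lt {t k n : ℕ} (ht : t + 1 < n) (hk : k < n) : nswap t k < n := by
  unfold nswap; split_ifs <;> omega

lemma getElem_swap_pair (p q : List α) (x z : α) (k : ℕ)
    (hk : k < (p++z::x::q).length) (hk' : nswap p.length k < (p++x::z::q).length) :
    (p++z::x::q)[k] = (p++x::z::q)[nswap p.length k] := by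
  have hlen : (p++z::x::q).length = p.length + q.length + 2 := by simp; omega
  by_cases h1 : k = p.length
  · subst h1
    rw [getElem_mid0 p q z x hk]
    have : nswap p.length p.length = p.length + 1 := by unfold nswap; simp
    simp only [this] at hk' ⊢
    rw [getElem_mid1 p q x z hk']
  · by_cases h2 : k = p.length + 1
    · subst h2
      rw [getElem_mid1 p q z x hk]
      have : nswap p.length (p.length+1) = p.length := by unfold nswap; simp
      simp only [this] at hk' ⊢
      rw [getElem_mid0 p q x z hk']
    · have hns : nswap p.length k = k := by unfold nswap; split_ifs <;> omega
      simp only [hns] at hk' ⊢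
      rcases lt_or_ge k p.length with h3 | h3
      · rw [List.getElem_append_left h3, List.getElem_append_left h3]
      · obtain ⟨m, rfl⟩ : ∃ m, k = p.length + 2 + m := ⟨k - p.length - 2, by omega⟩
        rw [getElem_two_right p q z x m hk (by simp at hk; omega),
          getElem_two_right p q x z m hk' (by simp at hk; omega)]

end Swap

section SwapStd

variable {key : Letter N → ℕ}

/-- The index-swap equivalence between positions of the two swapped words. -/
def swapEquiv (p q : List (Letter N)) (x z : Letter N) :
    Fin (p++z::x::q).length ≃ Fin (p++x::z::q).length where
  toFun j := ⟨nswap p.length j, nswap_lt (by simp) (by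
    have := j.2; simp at this ⊢; omega)⟩
  invFun j := ⟨nswap p.length j, nswap_lt (by simp) (by
    have := j.2; simp at this ⊢; omega)⟩
  left_inv j := by ext; simp [nswap_nswap]
  right_inv j := by ext; simp [nswap_nswap]

lemma swapEquiv_get (p q : List (Letter N)) (x z : Letter N)
    (j : Fin (p++z::x::q).length) :
    (p++z::x::q).get j = (p++x::z::q).get (swapEquiv p q x z j) := by
  simp only [List.get_eq_getElem]
  exact getElem_swap_pair p q x z j j.2 _

lemma swapEquiv_order (p q : List (Letter N)) (x z : Letter N) (hxz : x ≠ z)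
    (j1 j2 : Fin (p++z::x::q).length)
    (he : (p++z::x::q).get j1 = (p++z::x::q).get j2) :
    (j1 < j2 ↔ swapEquiv p q x z j1 < swapEquiv p q x z j2) := by
  have hlen : (p++z::x::q).length = p.length + q.length + 2 := by simp; omega
  by_cases hA : j1.val = p.length ∧ j2.val = p.length + 1
  · exfalso
    apply hxz
    have e1 : (p++z::x::q).get j1 = z := by
      simp only [List.get_eq_getElem, hA.1]; exact getElem_mid0 p q z x (hA.1 ▸ j1.2)
    have e2 : (p++z::x::q).get j2 = x := by
      simp only [List.get_eq_getElem, hA.2]; exact getElem_mid1 p q z x (hA.2 ▸ j2.2)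
    rw [e1, e2] at he
    exact (he.symm.trans rfl) ▸ rfl
  · by_cases hB : j1.val = p.length + 1 ∧ j2.val = p.length
    · exfalso
      apply hxz
      have e1 : (p++z::x::q).get j1 = x := by
        simp only [List.get_eq_getElem, hB.1]; exact getElem_mid1 p q z x (hB.1 ▸ j1.2)
      have e2 : (p++z::x::q).get j2 = z := by
        simp only [List.get_eq_getElem, hB.2]; exact getElem_mid0 p q z x (hB.2 ▸ j2.2)
      rw [e1, e2] at he
      exact he
    · simp only [Fin.lt_def, swapEquiv, Equiv.coe_fn_mk]
      unfold nswap
      push_neg at hA hB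
      split_ifs <;> omega

lemma labL_swap (p q : List (Letter N)) (x z : Letter N) (hxz : x ≠ z)
    (i : Fin (p++z::x::q).length) :
    labL key (p++z::x::q) i = labL key (p++x::z::q) (swapEquiv p q x z i) := by
  classical
  have hget : ∀ j' : Fin (p++z::x::q).length,
      (p++z::x::q).get j' = (p++x::z::q).get (swapEquiv p q x z j') :=
    swapEquiv_get p q x z
  have hgi := hget i
  have hA : (Finset.univ.filter (fun j' : Fin (p++z::x::q).length =>
        key ((p++z::x::q).get j') < key ((p++z::x::q).get i))).card
      = (Finset.univ.filter (fun j1 : Fin (p++x::z::q).length =>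
        key ((p++x::z::q).get j1) < key ((p++x::z::q).get (swapEquiv p q x z i)))).card := by
    apply Finset.card_equiv (swapEquiv p q x z)
    intro j'
    simp only [Finset.mem_filter, Finset.mem_univ, true_and]
    rw [hget j', hgi]
  have hc : ((p++z::x::q).get i).2 = ((p++x::z::q).get (swapEquiv p q x z i)).2 := by
    rw [hgi]
  have hB1 : (Finset.univ.filter (fun j' : Fin (p++z::x::q).length =>
        i < j' ∧ (p++z::x::q).get j' = (p++z::x::q).get i)).card
      = (Finset.univ.filter (fun j1 : Fin (p++x::z::q).length =>
        swapEquiv p q x z i < j1 ∧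
          (p++x::z::q).get j1 = (p++x::z::q).get (swapEquiv p q x z i))).card := by
    apply Finset.card_equiv (swapEquiv p q x z)
    intro j'
    simp only [Finset.mem_filter, Finset.mem_univ, true_and]
    constructor
    · rintro ⟨h1, h2⟩
      refine ⟨(swapEquiv_order p q x z hxz i j' h2.symm).1 h1, ?_⟩
      rw [← hget j', ← hgi]
      exact h2
    · rintro ⟨h1, h2⟩
      have h2' : (p++z::x::q).get j' = (p++z::x::q).get i := by
        rw [hget j', hgi]
        exact h2
      exact ⟨(swapEquiv_order p q x z hxz i j' h2'.symm).2 h1, h2'⟩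
  have hB2 : (Finset.univ.filter (fun j' : Fin (p++z::x::q).length =>
        j' < i ∧ (p++z::x::q).get j' = (p++z::x::q).get i)).card
      = (Finset.univ.filter (fun j1 : Fin (p++x::z::q).length =>
        j1 < swapEquiv p q x z i ∧
          (p++x::z::q).get j1 = (p++x::z::q).get (swapEquiv p q x z i))).card := by
    apply Finset.card_equiv (swapEquiv p q x z)
    intro j'
    simp only [Finset.mem_filter, Finset.mem_univ, true_and]
    constructor
    · rintro ⟨h1, h2⟩
      refine ⟨(swapEquiv_order p q x z hxz j' i h2).1 h1, ?_⟩
      rw [← hget j', ← hgi]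
      exact h2
    · rintro ⟨h1, h2⟩
      have h2' : (p++z::x::q).get j' = (p++z::x::q).get i := by
        rw [hget j', hgi]
        exact h2
      exact ⟨(swapEquiv_order p q x z hxz j' i h2').2 h1, h2'⟩
  unfold labL
  rw [hA, hc]
  split
  · rw [hB1]
  · rw [hB2]

end SwapStd

section Shapes

variable {α : Type*}

lemma getElem_mid0' (P Q : List α) (a b : α) (k : ℕ) (hk : k = P.length)
    (h : k < (P++a::b::Q).length) : (P++a::b::Q)[k] = a := by
  subst hk; exact getElem_mid0 P Q a b h

lemma getElem_mid1' (P Q : List α) (a b : α) (k : ℕ) (hk : k = P.length + 1)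
    (h : k < (P++a::b::Q).length) : (P++a::b::Q)[k] = b := by
  subst hk; exact getElem_mid1 P Q a b h

lemma getElem_right' (P Q : List α) (a b : α) (k m : ℕ) (hk : k = P.length + 2 + m)
    (h : k < (P++a::b::Q).length) (hq : m < Q.length) : (P++a::b::Q)[k] = Q[m] := by
  subst hk; exact getElem_two_right P Q a b m h hq

lemma getElem_idx_congr (l : List α) (i j : ℕ) (h : i = j) (hi : i < l.length) :
    l[i] = l[j]'(h ▸ hi) := by subst h; rfl

lemma decomp3 (u : List α) (t : ℕ) (h : t + 3 ≤ u.length) :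
    ∃ (P' Q' : List α) (h0 : t < u.length) (h1 : t+1 < u.length) (h2 : t+2 < u.length),
      u = P' ++ u[t] :: u[t+1] :: u[t+2] :: Q' ∧ P'.length = t := by
  refine ⟨u.take t, u.drop (t+3), by omega, by omega, by omega, ?_, by
    rw [List.length_take]; omega⟩
  conv_lhs => rw [← List.take_append_drop t u]
  congr 1
  rw [List.drop_eq_getElem_cons (by omega : t < u.length)]
  congr 1
  rw [List.drop_eq_getElem_cons (by omega : t+1 < u.length)]
  congr 1
  rw [List.drop_eq_getElem_cons (by omega : t+2 < u.length)]

end Shapes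

section StdSwapShape

variable {key : Letter N → ℕ}

lemma stdz_swap (p q : List (Letter N)) (x z : Letter N) (hxz : x ≠ z)
    (P' Q' : List ℕ) (a b : ℕ)
    (h : stdz key (p++x::z::q) = P' ++ a :: b :: Q') (hP : P'.length = p.length) :
    stdz key (p++z::x::q) = P' ++ b :: a :: Q' := by
  have hl0 : (p++x::z::q).length = p.length + q.length + 2 := by simp; omega
  have hl0' : (p++z::x::q).length = p.length + q.length + 2 := by simp; omega
  have hlh : P'.length + Q'.length + 2 = p.length + q.length + 2 := by
    have := congrArg List.length h
    rw [stdz_length] at this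
    simp at this
    omega
  apply List.ext_getElem
  · rw [stdz_length]; simp at hlh ⊢; omega
  intro k h1 h2
  have h1' : k < (p++z::x::q).length := by rw [stdz_length] at h1; exact h1
  have hk' : nswap p.length k < (p++x::z::q).length :=
    nswap_lt (by omega) (by omega)
  have hlab : (stdz key (p++z::x::q))[k]
      = labL key (p++x::z::q) (swapEquiv p q x z ⟨k, h1'⟩) := by
    rw [stdz_getElem key _ k h1 h1']
    exact labL_swap p q x z hxz ⟨k, h1'⟩
  have hval : (swapEquiv p q x z ⟨k, h1'⟩ : Fin (p++x::z::q).length)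
      = ⟨nswap p.length k, hk'⟩ := rfl
  rw [hlab, hval,
    ← stdz_getElem key (p++x::z::q) (nswap p.length k) (by rw [stdz_length]; exact hk') hk',
    List.getElem_of_eq h (by rw [stdz_length]; exact hk')]
  have hablen : (P' ++ a :: b :: Q').length = p.length + q.length + 2 := by
    simp; omega
  have hQlen : nswap p.length k < (P' ++ a :: b :: Q').length :=
    nswap_lt (by omega) (by omega)
  by_cases e1 : k = p.length
  · rw [getElem_mid1' P' Q' a b _ (by unfold nswap; rw [if_pos e1]; omega) hQlen,
      getElem_mid0' P' Q' b a k (by omega) h2]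
  · by_cases e2 : k = p.length + 1
    · rw [getElem_mid0' P' Q' a b _ (by unfold nswap; rw [if_neg e1, if_pos e2]; omega) hQlen,
        getElem_mid1' P' Q' b a k (by omega) h2]
    · have hns : nswap p.length k = k := by unfold nswap; split_ifs <;> omega
      have hidx := getElem_idx_congr (P' ++ a :: b :: Q') (nswap p.length k) k hns hQlen
      rw [hidx]
      rcases lt_or_ge k p.length with h3 | h3
      · exact (List.getElem_append_left (by omega : k < P'.length)).trans
          (List.getElem_append_left (by omega : k < P'.length)).symm
      · obtain ⟨m, hm⟩ : ∃ m, k = P'.length + 2 + m := ⟨k - P'.length - 2, by omega⟩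
        rw [getElem_right' P' Q' a b k m hm (by omega) (by simp at hlh ⊢; omega),
          getElem_right' P' Q' b a k m hm h2 (by simp at hlh ⊢; omega)]

end StdSwapShape

section ContentInj

variable {key : Letter N → ℕ}

lemma card_filter_get (v : List (Letter N)) (P : Letter N → Prop) [DecidablePred P] :
    (Finset.univ.filter (fun j : Fin v.length => P (v.get j))).card
      = v.countP (fun y => decide (P y)) := by
  rw [← length_filter_finRange (fun j : Fin v.length => P (v.get j))]
  rw [← List.countP_eq_length_filter]
  conv_rhs => rw [← List.ofFn_get v, List.ofFn_eq_map]
  rw [List.countP_map]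
  rfl

/-- The count bound used repeatedly: a label is bounded by the count of strictly
smaller letters plus the count of the letter itself. -/
lemma lab_le_bound (w : List (Letter N)) (i : Fin w.length) :
    labL key w i ≤ (Finset.univ.filter
        (fun j : Fin w.length => key (w.get j) < key (w.get i))).card +
      (Finset.univ.filter (fun j : Fin w.length => w.get j = w.get i)).card := by
  classical
  have hi : i ∈ Finset.univ.filter (fun j' : Fin w.length => w.get j' = w.get i) := by simp
  have herase : ∀ s : Finset (Fin w.length),
      s ⊆ (Finset.univ.filter (fun j' : Fin w.length => w.get j' = w.get i)).erase i →
      s.card + 1 ≤ (Finset.univ.filter (fun j' : Fin w.length => w.get j' = w.get i)).card := by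
    intro s hs
    have h1 := Finset.card_le_card hs
    have h2 := Finset.card_erase_add_one hi
    omega
  unfold labL
  have hb : (if (w.get i).2 then
      (Finset.univ.filter (fun j' : Fin w.length => i < j' ∧ w.get j' = w.get i)).card
    else
      (Finset.univ.filter (fun j' : Fin w.length => j' < i ∧ w.get j' = w.get i)).card) + 1
      ≤ (Finset.univ.filter (fun j' : Fin w.length => w.get j' = w.get i)).card := by
    split
    · apply herase
      intro a ha
      simp only [Finset.mem_filter, Finset.mem_univ, true_and] at ha
      simp only [Finset.mem_erase, Finset.mem_filter, Finset.mem_univ, true_and]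
      exact ⟨fun he => absurd he.symm (ne_of_lt ha.1), ha.2⟩
    · apply herase
      intro a ha
      simp only [Finset.mem_filter, Finset.mem_univ, true_and] at ha
      simp only [Finset.mem_erase, Finset.mem_filter, Finset.mem_univ, true_and]
      exact ⟨fun he => absurd he (ne_of_lt ha.1), ha.2⟩
  omega

lemma count_lab_lt (w : List (Letter N)) (i : Fin w.length) (K : ℕ)
    (h : key (w.get i) < K) :
    labL key w i ≤ (Finset.univ.filter
      (fun j : Fin w.length => key (w.get j) < K)).card := by
  classical
  have h1 := lab_le_bound (key := key) w i
  have hdisj : Disjoint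
      (Finset.univ.filter (fun j' : Fin w.length => key (w.get j') < key (w.get i)))
      (Finset.univ.filter (fun j' : Fin w.length => w.get j' = w.get i)) := by
    rw [Finset.disjoint_left]
    intro a ha hb
    simp only [Finset.mem_filter, Finset.mem_univ, true_and] at ha hb
    rw [hb] at ha
    omega
  have hsub : (Finset.univ.filter (fun j' : Fin w.length => key (w.get j') < key (w.get i))) ∪
      (Finset.univ.filter (fun j' : Fin w.length => w.get j' = w.get i)) ⊆
      (Finset.univ.filter (fun j' : Fin w.length => key (w.get j') < K)) := by
    intro a ha
    simp only [Finset.mem_union, Finset.mem_filter, Finset.mem_univ, true_and] at ha ⊢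
    rcases ha with h2 | h2
    · omega
    · rw [h2]; exact h
  have := Finset.card_le_card hsub
  rw [Finset.card_union_of_disjoint hdisj] at this
  omega

lemma lab_gt_A (w : List (Letter N)) (i : Fin w.length) :
    (Finset.univ.filter (fun j : Fin w.length => key (w.get j) < key (w.get i))).card
      < labL key w i := by
  unfold labL; omega

lemma count_indep (c : Letter N) (l : List (Letter N)) :
    l.count c = @List.count _ instBEqOfDecidableEq c l := by
  unfold List.count
  apply List.countP_congr
  intro a _
  by_cases h : a = c <;> simp [instBEqOfDecidableEq, h]

lemma stdz_inj_of_content (hkey : Function.Injective key) (v v' : List (Letter N))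
    (hc : ∀ c, v.count c = v'.count c) (hs : stdz key v = stdz key v') : v = v' := by
  classical
  have hperm : v.Perm v' := List.perm_iff_count.2
    (fun c => by exact hc c)
  have hlen : v.length = v'.length := hperm.length_eq
  have hcp : ∀ (K : ℕ),
      (Finset.univ.filter (fun j : Fin v.length => key (v.get j) < K)).card
        = (Finset.univ.filter (fun j : Fin v'.length => key (v'.get j) < K)).card := by
    intro K
    rw [card_filter_get v (fun y => key y < K), card_filter_get v' (fun y => key y < K)]
    exact hperm.countP_eq _
  apply List.ext_getElem hlen
  intro k h1 h2
  have hlab : labL key v ⟨k, h1⟩ = labL key v' ⟨k, h2⟩ := by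
    rw [← stdz_getElem key v k (by rw [stdz_length]; exact h1) h1,
      ← stdz_getElem key v' k (by rw [stdz_length]; exact h2) h2]
    exact List.getElem_of_eq hs _
  have main : ∀ (w w' : List (Letter N)) (i : Fin w.length) (i' : Fin w'.length),
      (∀ K, (Finset.univ.filter (fun j : Fin w.length => key (w.get j) < K)).card
        = (Finset.univ.filter (fun j : Fin w'.length => key (w'.get j) < K)).card) →
      key (w.get i) < key (w'.get i') → labL key w i < labL key w' i' := by
    intro w w' i i' hK hlt
    calc labL key w i
        ≤ (Finset.univ.filter (fun j : Fin w.length =>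
            key (w.get j) < key (w'.get i'))).card := count_lab_lt w i _ hlt
      _ = (Finset.univ.filter (fun j : Fin w'.length =>
            key (w'.get j) < key (w'.get i'))).card := hK _
      _ < labL key w' i' := lab_gt_A w' i'
  rcases lt_trichotomy (key (v.get ⟨k, h1⟩)) (key (v'.get ⟨k, h2⟩)) with hlt | heq | hgt
  · exact absurd hlab (ne_of_lt (main v v' _ _ hcp hlt))
  · simpa using hkey heq
  · exact absurd hlab.symm (ne_of_lt (main v' v _ _ (fun K => (hcp K).symm) hgt))

end ContentInj

/-! ### Generic word congruences and monomial separation -/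

section StepCon

variable {α : Type*} (R : List α → List α → Prop)

/-- One rewriting step in context. -/
def StepL (u v : List α) : Prop := ∃ p q a b, R a b ∧ u = p++a++q ∧ v = p++b++q

/-- The equivalence generated by rewriting steps in context. -/
def ESt (u v : List α) : Prop := Relation.EqvGen (StepL R) u v

lemma ESt.rel {a b : List α} (h : R a b) : ESt R a b :=
  Relation.EqvGen.rel _ _ ⟨[], [], a, b, h, by simp, by simp⟩

lemma ESt.refl (u : List α) : ESt R u u := Relation.EqvGen.refl u

lemma ESt.symm {u v : List α} (h : ESt R u v) : ESt R v u := Relation.EqvGen.symm _ _ h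

lemma ESt.trans {u v w : List α} (h : ESt R u v) (h' : ESt R v w) : ESt R u w :=
  Relation.EqvGen.trans _ _ _ h h'

lemma ESt_append_right (w : List α) {u v : List α} (h : ESt R u v) :
    ESt R (u++w) (v++w) := by
  induction h with
  | rel x y hxy =>
    rcases hxy with ⟨p, q, a, b, hr, rfl, rfl⟩
    exact Relation.EqvGen.rel _ _ ⟨p, q++w, a, b, hr, by simp, by simp⟩
  | refl x => exact ESt.refl R _
  | symm x y _ ih => exact ESt.symm R ih
  | trans x y z _ _ ih1 ih2 => exact ESt.trans R ih1 ih2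

lemma ESt_append_left (w : List α) {u v : List α} (h : ESt R u v) :
    ESt R (w++u) (w++v) := by
  induction h with
  | rel x y hxy =>
    rcases hxy with ⟨p, q, a, b, hr, rfl, rfl⟩
    exact Relation.EqvGen.rel _ _ ⟨w++p, q, a, b, hr, by simp, by simp⟩
  | refl x => exact ESt.refl R _
  | symm x y _ ih => exact ESt.symm R ih
  | trans x y z _ _ ih1 ih2 => exact ESt.trans R ih1 ih2

lemma ESt_append {u v u' v' : List α} (h : ESt R u v) (h' : ESt R u' v') :
    ESt R (u++u') (v++v') :=
  Relation.EqvGen.trans _ _ _ (ESt_append_right R u' h) (ESt_append_left R v h')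

/-- The congruence on the free monoid generated by the rewriting relation. -/
def stepCon : Con (FreeMonoid α) where
  r u v := ESt R (FreeMonoid.toList u) (FreeMonoid.toList v)
  iseqv := ⟨fun _ => ESt.refl R _, fun h => ESt.symm R h, fun h h' => ESt.trans R h h'⟩
  mul' h1 h2 := by
    simpa only [FreeMonoid.toList_mul] using ESt_append R h1 h2

/-- Monomial of a word in the free algebra. -/
def wm (w : List α) : MonoidAlgebra ℤ (FreeMonoid α) :=
  MonoidAlgebra.single (FreeMonoid.ofList w) 1

lemma wm_append (u v : List α) : wm (u++v) = wm u * wm v := by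
  unfold wm
  rw [MonoidAlgebra.single_mul_single, FreeMonoid.ofList_append]
  norm_num

variable (S : MonoidAlgebra ℤ (FreeMonoid α) → MonoidAlgebra ℤ (FreeMonoid α) → Prop)
variable (hSR : ∀ A B, S A B → ∃ a b, R a b ∧ A = wm a ∧ B = wm b)

/-- Separation map into the monoid algebra of the quotient monoid. -/
def alphaG : RingQuot S →+* MonoidAlgebra ℤ (stepCon R).Quotient :=
  RingQuot.lift ⟨MonoidAlgebra.mapDomainRingHom ℤ (stepCon R).mk', by
    intro A B h
    obtain ⟨a, b, hr, rfl, rfl⟩ := hSR A B h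
    show MonoidAlgebra.mapDomainRingHom ℤ (stepCon R).mk' (wm a)
      = MonoidAlgebra.mapDomainRingHom ℤ (stepCon R).mk' (wm b)
    unfold wm
    show MonoidAlgebra.mapDomain _ _ = MonoidAlgebra.mapDomain _ _
    rw [MonoidAlgebra.mapDomain_single, MonoidAlgebra.mapDomain_single]
    congr 1
    have : (stepCon R) (FreeMonoid.ofList a) (FreeMonoid.ofList b) := by
      show ESt R _ _
      rw [FreeMonoid.toList_ofList, FreeMonoid.toList_ofList]
      exact ESt.rel R hr
    exact (Con.eq _).2 this⟩

lemma alphaG_wm (w : List α) :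
    alphaG R S hSR (RingQuot.mkRingHom S (wm w)) =
      MonoidAlgebra.single ((stepCon R).mk' (FreeMonoid.ofList w)) 1 := by
  unfold alphaG
  rw [RingQuot.lift_mkRingHom_apply]
  unfold wm
  show MonoidAlgebra.mapDomain _ _ = _
  rw [MonoidAlgebra.mapDomain_single]

lemma mk_wm_eq_of_ESt (hRS : ∀ a b, R a b → S (wm a) (wm b)) {u v : List α} (h : ESt R u v) :
    RingQuot.mkRingHom S (wm u) = RingQuot.mkRingHom S (wm v) := by
  induction h with
  | rel x y hxy =>
    rcases hxy with ⟨p, q, a, b, hr, rfl, rfl⟩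
    have hmid : RingQuot.mkRingHom S (wm a) = RingQuot.mkRingHom S (wm b) :=
      RingQuot.mkRingHom_rel (hRS a b hr)
    rw [wm_append, wm_append, wm_append, wm_append, map_mul, map_mul, map_mul, map_mul, hmid]
  | refl x => rfl
  | symm x y _ ih => exact ih.symm
  | trans x y z _ _ ih1 ih2 => exact ih1.trans ih2

lemma mk_wm_eq_iff (hSR : ∀ A B, S A B → ∃ a b, R a b ∧ A = wm a ∧ B = wm b)
    (hRS : ∀ a b, R a b → S (wm a) (wm b)) (u v : List α) :
    RingQuot.mkRingHom S (wm u) = RingQuot.mkRingHom S (wm v) ↔ ESt R u v := by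
  constructor
  · intro h
    have h2 := congrArg (alphaG R S hSR) h
    rw [alphaG_wm, alphaG_wm] at h2
    have h3 := MonoidAlgebra.single_left_injective (one_ne_zero) h2
    have h4 := (Con.eq _).1 h3
    show ESt R _ _
    rw [← FreeMonoid.toList_ofList u, ← FreeMonoid.toList_ofList v]
    exact h4
  · exact mk_wm_eq_of_ESt R S hRS

end StepCon



/-! ### Word-level relations -/

inductive pW (N : ℕ) (key : Letter N → ℕ) : List (Letter N) → List (Letter N) → Prop
  | k1 (x y z : Letter N) (h1 : key x < key y) (h2 : key y < key z) :
      pW N key [x, z, y] [z, x, y]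
  | k2 (x y z : Letter N) (h1 : key x < key y) (h2 : key y < key z) :
      pW N key [y, x, z] [y, z, x]
  | k3 (x y : Letter N) (hy : y.2 = false) (h : key x < key y) :
      pW N key [y, y, x] [y, x, y]
  | k3b (y z : Letter N) (hy : y.2 = false) (h : key y < key z) :
      pW N key [z, y, y] [y, z, y]
  | k4 (y z : Letter N) (hy : y.2 = true) (h : key y < key z) :
      pW N key [y, y, z] [y, z, y]
  | k4b (x y : Letter N) (hy : y.2 = true) (h : key x < key y) :
      pW N key [x, y, y] [y, x, y]

inductive kWrel : List ℕ → List ℕ → Prop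
  | k1 (a b c : ℕ) (h1 : a < b) (h2 : b < c) : kWrel [a, c, b] [c, a, b]
  | k2 (a b c : ℕ) (h1 : a < b) (h2 : b < c) : kWrel [b, a, c] [b, c, a]
  | k3 (a b : ℕ) (h : a < b) : kWrel [b, b, a] [b, a, b]
  | k4 (b c : ℕ) (h : b < c) : kWrel [c, b, b] [b, c, b]

lemma wrd_eq_wm (w : List (Letter N)) : wrd w = wm w := rfl

lemma wrdO_eq_wm (w : List ℕ) : wrdO w = wm w := rfl

lemma placRel_exists (key : Letter N → ℕ) :
    ∀ A B, placRel N key A B → ∃ a b, pW N key a b ∧ A = wm a ∧ B = wm b := by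
  intro A B h
  cases h with
  | k1 x y z h1 h2 => exact ⟨_, _, pW.k1 x y z h1 h2, rfl, rfl⟩
  | k2 x y z h1 h2 => exact ⟨_, _, pW.k2 x y z h1 h2, rfl, rfl⟩
  | k3 x y hy h => exact ⟨_, _, pW.k3 x y hy h, rfl, rfl⟩
  | k3b y z hy h => exact ⟨_, _, pW.k3b y z hy h, rfl, rfl⟩
  | k4 y z hy h => exact ⟨_, _, pW.k4 y z hy h, rfl, rfl⟩
  | k4b x y hy h => exact ⟨_, _, pW.k4b x y hy h, rfl, rfl⟩

lemma pW_to_placRel (key : Letter N → ℕ) :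
    ∀ a b, pW N key a b → placRel N key (wm a) (wm b) := by
  intro a b h
  cases h with
  | k1 x y z h1 h2 => exact placRel.k1 x y z h1 h2
  | k2 x y z h1 h2 => exact placRel.k2 x y z h1 h2
  | k3 x y hy h => exact placRel.k3 x y hy h
  | k3b y z hy h => exact placRel.k3b y z hy h
  | k4 y z hy h => exact placRel.k4 y z hy h
  | k4b x y hy h => exact placRel.k4b x y hy h

lemma knuthRel_exists :
    ∀ A B, knuthRel A B → ∃ a b, kWrel a b ∧ A = wm a ∧ B = wm b := by
  intro A B h
  cases h with
  | k1 a b c h1 h2 => exact ⟨_, _, kWrel.k1 a b c h1 h2, rfl, rfl⟩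
  | k2 a b c h1 h2 => exact ⟨_, _, kWrel.k2 a b c h1 h2, rfl, rfl⟩
  | k3 a b h => exact ⟨_, _, kWrel.k3 a b h, rfl, rfl⟩
  | k4 b c h => exact ⟨_, _, kWrel.k4 b c h, rfl, rfl⟩

lemma kWrel_to_knuthRel : ∀ a b, kWrel a b → knuthRel (wm a) (wm b) := by
  intro a b h
  cases h with
  | k1 a b c h1 h2 => exact knuthRel.k1 a b c h1 h2
  | k2 a b c h1 h2 => exact knuthRel.k2 a b c h1 h2
  | k3 a b h => exact knuthRel.k3 a b h
  | k4 b c h => exact knuthRel.k4 b c h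

lemma mkP_eq_iff (key : Letter N → ℕ) (u v : List (Letter N)) :
    RingQuot.mkRingHom (placRel N key) (wrd u) = RingQuot.mkRingHom (placRel N key) (wrd v)
      ↔ ESt (pW N key) u v := by
  rw [wrd_eq_wm, wrd_eq_wm]
  exact mk_wm_eq_iff (pW N key) (placRel N key) (placRel_exists key) (pW_to_placRel key) u v

lemma mkK_eq_iff (u v : List ℕ) :
    RingQuot.mkRingHom knuthRel (wrdO u) = RingQuot.mkRingHom knuthRel (wrdO v)
      ↔ ESt kWrel u v := by
  rw [wrdO_eq_wm, wrdO_eq_wm]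
  exact mk_wm_eq_iff kWrel knuthRel knuthRel_exists kWrel_to_knuthRel u v

/-- `pW` preserves letter counts. -/
lemma pW_count (key : Letter N → ℕ) {a b : List (Letter N)} (h : pW N key a b)
    (c : Letter N) : a.count c = b.count c := by
  cases h <;> simp [List.count_cons] <;> omega

lemma ESt_pW_count (key : Letter N → ℕ) {u v : List (Letter N)} (h : ESt (pW N key) u v)
    (c : Letter N) : u.count c = v.count c := by
  induction h with
  | rel x y hxy =>
    rcases hxy with ⟨p, q, a, b, hr, rfl, rfl⟩
    simp only [List.count_append]
    rw [pW_count key hr c]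
  | refl x => rfl
  | symm x y _ ih => exact ih.symm
  | trans x y z _ _ ih1 ih2 => exact ih1.trans ih2

/-! ### Window helpers -/

section Window

variable {α : Type*}

lemma win_len (p q : List α) (c1 c2 c3 : α) :
    (p++c1::c2::c3::q).length = p.length + q.length + 3 := by
  simp only [List.length_append, List.length_cons]; omega

lemma win_get0 (p q : List α) (c1 c2 c3 : α) (h : p.length < (p++c1::c2::c3::q).length) :
    (p++c1::c2::c3::q).get ⟨p.length, h⟩ = c1 := by
  simp only [List.get_eq_getElem]
  exact getElem_mid0 p (c3::q) c1 c2 h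

lemma win_get1 (p q : List α) (c1 c2 c3 : α)
    (h : p.length + 1 < (p++c1::c2::c3::q).length) :
    (p++c1::c2::c3::q).get ⟨p.length+1, h⟩ = c2 := by
  simp only [List.get_eq_getElem]
  exact getElem_mid1 p (c3::q) c1 c2 h

lemma win_get2 (p q : List α) (c1 c2 c3 : α)
    (h : p.length + 2 < (p++c1::c2::c3::q).length) :
    (p++c1::c2::c3::q).get ⟨p.length+2, h⟩ = c3 := by
  simp only [List.get_eq_getElem]
  exact getElem_right' p (c3::q) c1 c2 (p.length+2) 0 (by omega) h (by simp)

end Window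

section WindowData

variable {key : Letter N → ℕ}

lemma window_data (key : Letter N → ℕ) (p q : List (Letter N)) (c1 c2 c3 : Letter N) :
    ∃ (P' Q' : List ℕ) (L0 L1 L2 : ℕ),
      stdz key (p++c1::c2::c3::q) = P' ++ L0 :: L1 :: L2 :: Q'
      ∧ P'.length = p.length
      ∧ L0 = labL key (p++c1::c2::c3::q)
          ⟨p.length, by rw [win_len]; omega⟩
      ∧ L1 = labL key (p++c1::c2::c3::q)
          ⟨p.length+1, by rw [win_len]; omega⟩
      ∧ L2 = labL key (p++c1::c2::c3::q)
          ⟨p.length+2, by rw [win_len]; omega⟩ := by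
  have hlen : (stdz key (p++c1::c2::c3::q)).length = p.length + q.length + 3 := by
    rw [stdz_length, win_len]
  obtain ⟨P', Q', h0, h1, h2, hu, hP⟩ :=
    decomp3 (stdz key (p++c1::c2::c3::q)) p.length (by omega)
  refine ⟨P', Q', _, _, _, hu, hP, ?_, ?_, ?_⟩
  · rw [stdz_getElem key _ p.length h0 (by rw [win_len]; omega)]
  · rw [stdz_getElem key _ (p.length+1) h1 (by rw [win_len]; omega)]
  · rw [stdz_getElem key _ (p.length+2) h2 (by rw [win_len]; omega)]

/-- Transfer of a plactic rewriting step to a Knuth step on standardizations. -/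
lemma stepP_to_EStK (key : Letter N → ℕ) {a b : List (Letter N)} (h : pW N key a b)
    (p q : List (Letter N)) :
    ESt kWrel (stdz key (p++a++q)) (stdz key (p++b++q)) := by
  cases h with
  | k1 x y z h1 h2 =>
    have e1 : p++[x,z,y]++q = p++x::z::y::q := by simp
    have e2 : p++[z,x,y]++q = p++z::x::y::q := by simp
    rw [e1, e2]
    obtain ⟨P', Q', L0, L1, L2, hu, hP, hL0, hL1, hL2⟩ := window_data key p q x z y
    have hg0 := win_get0 p q x z y (by rw [win_len]; omega)
    have hg1 := win_get1 p q x z y (by rw [win_len]; omega)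
    have hg2 := win_get2 p q x z y (by rw [win_len]; omega)
    have hL02 : L0 < L2 := by
      rw [hL0, hL2]
      apply lab_lt_of_key_lt
      rw [hg0, hg2]
      exact h1
    have hL21 : L2 < L1 := by
      rw [hL2, hL1]
      apply lab_lt_of_key_lt
      rw [hg2, hg1]
      exact h2
    have hxz : x ≠ z := fun he => by rw [he] at h1; omega
    have hswap : stdz key (p++z::x::y::q) = P' ++ L1 :: L0 :: L2 :: Q' :=
      stdz_swap p (y::q) x z hxz P' (L2::Q') L0 L1 hu hP
    apply Relation.EqvGen.rel
    exact ⟨P', Q', [L0, L1, L2], [L1, L0, L2],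
      kWrel.k1 L0 L2 L1 hL02 hL21, by rw [hu]; simp, by rw [hswap]; simp⟩
  | k2 x y z h1 h2 =>
    have e1 : p++[y,x,z]++q = p++y::x::z::q := by simp
    have e2 : p++[y,z,x]++q = p++y::z::x::q := by simp
    rw [e1, e2]
    obtain ⟨P', Q', L0, L1, L2, hu, hP, hL0, hL1, hL2⟩ := window_data key p q y x z
    have hg0 := win_get0 p q y x z (by rw [win_len]; omega)
    have hg1 := win_get1 p q y x z (by rw [win_len]; omega)
    have hg2 := win_get2 p q y x z (by rw [win_len]; omega)
    have hL10 : L1 < L0 := by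
      rw [hL1, hL0]; apply lab_lt_of_key_lt; rw [hg1, hg0]; exact h1
    have hL02 : L0 < L2 := by
      rw [hL0, hL2]; apply lab_lt_of_key_lt; rw [hg0, hg2]; exact h2
    have hxz : x ≠ z := fun he => absurd (he ▸ h1) (by omega)
    have hu' : stdz key ((p++[y])++x::z::q) = (P'++[L0]) ++ L1::L2::Q' := by
      rw [show (p++[y])++x::z::q = p++y::x::z::q from by simp, hu]; simp
    have hswap := stdz_swap (p++[y]) q x z hxz (P'++[L0]) Q' L1 L2 hu' (by simp [hP])
    rw [show (p++[y])++z::x::q = p++y::z::x::q from by simp] at hswap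
    apply Relation.EqvGen.rel
    exact ⟨P', Q', [L0, L1, L2], [L0, L2, L1],
      kWrel.k2 L1 L0 L2 hL10 hL02, by rw [hu]; simp, by rw [hswap]; simp⟩
  | k3 x y hy h =>
    have e1 : p++[y,y,x]++q = p++y::y::x::q := by simp
    have e2 : p++[y,x,y]++q = p++y::x::y::q := by simp
    rw [e1, e2]
    obtain ⟨P', Q', L0, L1, L2, hu, hP, hL0, hL1, hL2⟩ := window_data key p q y y x
    have hg0 := win_get0 p q y y x (by rw [win_len]; omega)
    have hg1 := win_get1 p q y y x (by rw [win_len]; omega)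
    have hg2 := win_get2 p q y y x (by rw [win_len]; omega)
    have hL01 : L0 < L1 := by
      rw [hL0, hL1]
      apply lab_lt_same_unbarred (by rw [hg0, hg1]) (by rw [hg0]; exact hy)
        (Fin.mk_lt_mk.2 (by omega))
    have hL20 : L2 < L0 := by
      rw [hL2, hL0]; apply lab_lt_of_key_lt; rw [hg2, hg0]; exact h
    have hyx : y ≠ x := fun he => by rw [he] at h; omega
    have hu' : stdz key ((p++[y])++y::x::q) = (P'++[L0]) ++ L1::L2::Q' := by
      rw [show (p++[y])++y::x::q = p++y::y::x::q from by simp, hu]; simp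
    have hswap := stdz_swap (p++[y]) q y x hyx (P'++[L0]) Q' L1 L2 hu' (by simp [hP])
    rw [show (p++[y])++x::y::q = p++y::x::y::q from by simp] at hswap
    apply Relation.EqvGen.symm
    apply Relation.EqvGen.rel
    exact ⟨P', Q', [L0, L2, L1], [L0, L1, L2],
      kWrel.k2 L2 L0 L1 hL20 hL01, by rw [hswap]; simp, by rw [hu]; simp⟩
  | k3b y z hy h =>
    have e1 : p++[z,y,y]++q = p++z::y::y::q := by simp
    have e2 : p++[y,z,y]++q = p++y::z::y::q := by simp
    rw [e1, e2]
    obtain ⟨P', Q', L0, L1, L2, hu, hP, hL0, hL1, hL2⟩ := window_data key p q z y y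
    have hg0 := win_get0 p q z y y (by rw [win_len]; omega)
    have hg1 := win_get1 p q z y y (by rw [win_len]; omega)
    have hg2 := win_get2 p q z y y (by rw [win_len]; omega)
    have hL12 : L1 < L2 := by
      rw [hL1, hL2]
      apply lab_lt_same_unbarred (by rw [hg1, hg2]) (by rw [hg1]; exact hy)
        (Fin.mk_lt_mk.2 (by omega))
    have hL20 : L2 < L0 := by
      rw [hL2, hL0]; apply lab_lt_of_key_lt; rw [hg2, hg0]; exact h
    have hzy : z ≠ y := fun he => by rw [he] at h; omega
    have hswap : stdz key (p++y::z::y::q) = P' ++ L1 :: L0 :: L2 :: Q' :=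
      stdz_swap p (y::q) z y hzy P' (L2::Q') L0 L1 hu hP
    apply Relation.EqvGen.symm
    apply Relation.EqvGen.rel
    exact ⟨P', Q', [L1, L0, L2], [L0, L1, L2],
      kWrel.k1 L1 L2 L0 hL12 hL20, by rw [hswap]; simp, by rw [hu]; simp⟩
  | k4 y z hy h =>
    have e1 : p++[y,y,z]++q = p++y::y::z::q := by simp
    have e2 : p++[y,z,y]++q = p++y::z::y::q := by simp
    rw [e1, e2]
    obtain ⟨P', Q', L0, L1, L2, hu, hP, hL0, hL1, hL2⟩ := window_data key p q y y z
    have hg0 := win_get0 p q y y z (by rw [win_len]; omega)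
    have hg1 := win_get1 p q y y z (by rw [win_len]; omega)
    have hg2 := win_get2 p q y y z (by rw [win_len]; omega)
    have hL10 : L1 < L0 := by
      rw [hL1, hL0]
      apply lab_lt_same_barred (by rw [hg0, hg1]) (by rw [hg0]; exact hy)
        (Fin.mk_lt_mk.2 (by omega))
    have hL02 : L0 < L2 := by
      rw [hL0, hL2]; apply lab_lt_of_key_lt; rw [hg0, hg2]; exact h
    have hyz : y ≠ z := fun he => by rw [he] at h; omega
    have hu' : stdz key ((p++[y])++y::z::q) = (P'++[L0]) ++ L1::L2::Q' := by
      rw [show (p++[y])++y::z::q = p++y::y::z::q from by simp, hu]; simp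
    have hswap := stdz_swap (p++[y]) q y z hyz (P'++[L0]) Q' L1 L2 hu' (by simp [hP])
    rw [show (p++[y])++z::y::q = p++y::z::y::q from by simp] at hswap
    apply Relation.EqvGen.rel
    exact ⟨P', Q', [L0, L1, L2], [L0, L2, L1],
      kWrel.k2 L1 L0 L2 hL10 hL02, by rw [hu]; simp, by rw [hswap]; simp⟩
  | k4b x y hy h =>
    have e1 : p++[x,y,y]++q = p++x::y::y::q := by simp
    have e2 : p++[y,x,y]++q = p++y::x::y::q := by simp
    rw [e1, e2]
    obtain ⟨P', Q', L0, L1, L2, hu, hP, hL0, hL1, hL2⟩ := window_data key p q x y y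
    have hg0 := win_get0 p q x y y (by rw [win_len]; omega)
    have hg1 := win_get1 p q x y y (by rw [win_len]; omega)
    have hg2 := win_get2 p q x y y (by rw [win_len]; omega)
    have hL21 : L2 < L1 := by
      rw [hL2, hL1]
      apply lab_lt_same_barred (by rw [hg1, hg2]) (by rw [hg1]; exact hy)
        (Fin.mk_lt_mk.2 (by omega))
    have hL02 : L0 < L2 := by
      rw [hL0, hL2]; apply lab_lt_of_key_lt; rw [hg0, hg2]; exact h
    have hxy : x ≠ y := fun he => by rw [he] at h; omega
    have hswap : stdz key (p++y::x::y::q) = P' ++ L1 :: L0 :: L2 :: Q' :=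
      stdz_swap p (y::q) x y hxy P' (L2::Q') L0 L1 hu hP
    apply Relation.EqvGen.rel
    exact ⟨P', Q', [L0, L1, L2], [L1, L0, L2],
      kWrel.k1 L0 L2 L1 hL02 hL21, by rw [hu]; simp, by rw [hswap]; simp⟩

end WindowData

section Lift

variable {key : Letter N → ℕ}

lemma bar_false_of_lab_lt {w : List (Letter N)} {i j : Fin w.length}
    (hw : w.get i = w.get j) (hij : i < j) (hl : labL key w i < labL key w j) :
    (w.get i).2 = false := by
  cases hbv : (w.get i).2
  · rfl
  · exact absurd (lab_lt_same_barred (key := key) hw hbv hij) (by omega)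

lemma bar_true_of_lab_gt {w : List (Letter N)} {i j : Fin w.length}
    (hw : w.get i = w.get j) (hij : i < j) (hl : labL key w j < labL key w i) :
    (w.get i).2 = true := by
  cases hbv : (w.get i).2
  · exact absurd (lab_lt_same_unbarred (key := key) hw hbv hij) (by omega)
  · rfl

lemma lift_setup (v : List (Letter N)) (P Q : List ℕ) (A B C : ℕ)
    (hv : stdz key v = P++A::B::C::Q) :
    ∃ (vp vq : List (Letter N)) (X Z Y : Letter N)
      (h0 : P.length < v.length) (h1 : P.length+1 < v.length) (h2 : P.length+2 < v.length),
      v = vp ++ X :: Z :: Y :: vq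
      ∧ vp.length = P.length
      ∧ v.get ⟨P.length, h0⟩ = X
      ∧ v.get ⟨P.length+1, h1⟩ = Z
      ∧ v.get ⟨P.length+2, h2⟩ = Y
      ∧ A = labL key v ⟨P.length, h0⟩
      ∧ B = labL key v ⟨P.length+1, h1⟩
      ∧ C = labL key v ⟨P.length+2, h2⟩ := by
  have hlen : v.length = P.length + Q.length + 3 := by
    have := congrArg List.length hv
    rw [stdz_length, win_len] at this
    exact this
  obtain ⟨vp, vq, h0, h1, h2, hveq, hvp⟩ := decomp3 v P.length (by omega)
  refine ⟨vp, vq, _, _, _, h0, h1, h2, by simpa using hveq, hvp,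
    by simp, by simp, by simp, ?_, ?_, ?_⟩
  · rw [← stdz_getElem key v P.length (by rw [stdz_length]; omega) h0,
      List.getElem_of_eq hv (by rw [stdz_length]; omega)]
    exact (getElem_mid0 P (C::Q) A B (by rw [win_len]; omega)).symm
  · rw [← stdz_getElem key v (P.length+1) (by rw [stdz_length]; omega) h1,
      List.getElem_of_eq hv (by rw [stdz_length]; omega)]
    exact (getElem_mid1 P (C::Q) A B (by rw [win_len]; omega)).symm
  · rw [← stdz_getElem key v (P.length+2) (by rw [stdz_length]; omega) h2,
      List.getElem_of_eq hv (by rw [stdz_length]; omega)]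
    exact (getElem_right' P (C::Q) A B (P.length+2) 0 (by omega) (by rw [win_len]; omega)
      (by simp)).symm

lemma stepK_lift_fwd (hkey : Function.Injective key) {u u' : List ℕ}
    (h : StepL kWrel u u') (v : List (Letter N)) (hv : stdz key v = u) :
    ∃ v', stdz key v' = u' ∧ ESt (pW N key) v v' := by
  obtain ⟨P, Q, a3, b3, hr, rfl, rfl⟩ := h
  cases hr with
  | k1 a b c h1 h2 =>
    rw [show P++[a,c,b]++Q = P++a::c::b::Q from by simp] at hv
    obtain ⟨vp, vq, X, Z, Y, h0, h1', h2', hveq, hvp, hgX, hgZ, hgY, hA, hB, hC⟩ :=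
      lift_setup v P Q a c b hv
    have hcase1 : key X < key Y ∨ X = Y := by
      rw [← hgX, ← hgY]
      exact key_cases hkey (by rw [← hA, ← hC]; omega)
    have hcase2 : key Y < key Z ∨ Y = Z := by
      rw [← hgY, ← hgZ]
      exact key_cases hkey (by rw [← hC, ← hB]; omega)
    have hXZ : X ≠ Z := by
      intro hE
      rcases hcase1 with hK1 | hE1 <;> rcases hcase2 with hK2 | hE2
      · rw [hE] at hK1; omega
      · rw [hE2, hE] at hK1; omega
      · rw [← hE1, hE] at hK2; omega
      · -- all equal
        have hf : (v.get ⟨P.length, h0⟩).2 = false :=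
          bar_false_of_lab_lt (i := ⟨P.length, h0⟩) (j := ⟨P.length+2, h2'⟩)
            (by rw [hgX, hgY, hE1]) (Fin.mk_lt_mk.2 (by omega))
            (by rw [← hA, ← hC]; omega)
        have ht : (v.get ⟨P.length+1, h1'⟩).2 = true :=
          bar_true_of_lab_gt (i := ⟨P.length+1, h1'⟩) (j := ⟨P.length+2, h2'⟩)
            (by rw [hgZ, hgY, hE2]) (Fin.mk_lt_mk.2 (by omega))
            (by rw [← hB, ← hC]; omega)
        rw [hgX, hE1, hE2] at hf
        rw [hgZ] at ht
        rw [hf] at ht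
        exact Bool.false_ne_true ht
    refine ⟨vp ++ Z :: X :: Y :: vq, ?_, ?_⟩
    · have hv0 : stdz key (vp ++ X::Z::(Y::vq)) = P ++ a::c::(b::Q) := by
        rw [← hveq]; exact hv
      have := stdz_swap vp (Y::vq) X Z hXZ P (b::Q) a c hv0 hvp.symm
      rw [this]; simp
    · rcases hcase1 with hK1 | hE1
      · rcases hcase2 with hK2 | hE2
        · apply Relation.EqvGen.rel
          exact ⟨vp, vq, [X, Z, Y], [Z, X, Y], pW.k1 X Y Z hK1 hK2,
            by rw [hveq]; simp, by simp⟩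
        · -- Y = Z : pW.k4b, forward
          have hbar : Z.2 = true := by
            have := bar_true_of_lab_gt (i := ⟨P.length+1, h1'⟩) (j := ⟨P.length+2, h2'⟩)
              (by rw [hgZ, hgY, hE2]) (Fin.mk_lt_mk.2 (by omega))
              (by rw [← hB, ← hC]; omega)
            rw [hgZ] at this; exact this
          have hkXZ : key X < key Z := by rw [← hE2]; exact hK1
          apply Relation.EqvGen.rel
          exact ⟨vp, vq, [X, Z, Z], [Z, X, Z], pW.k4b X Z hbar hkXZ,
            by rw [hveq, hE2]; simp, by rw [hE2]; simp⟩
      · -- X = Y : pW.k3b, backward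
        have hkXZ : key X < key Z := by
          rcases hcase2 with hK2 | hE2
          · rw [hE1]; exact hK2
          · exact absurd (hE1.trans hE2) hXZ
        have hbar : X.2 = false := by
          have := bar_false_of_lab_lt (i := ⟨P.length, h0⟩) (j := ⟨P.length+2, h2'⟩)
            (by rw [hgX, hgY, hE1]) (Fin.mk_lt_mk.2 (by omega))
            (by rw [← hA, ← hC]; omega)
          rw [hgX] at this; exact this
        apply Relation.EqvGen.symm
        apply Relation.EqvGen.rel
        exact ⟨vp, vq, [Z, X, X], [X, Z, X], pW.k3b X Z hbar hkXZ,
          by rw [hE1]; simp, by rw [hveq, hE1]; simp⟩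
  | k2 a b c h1 h2 =>
    rw [show P++[b,a,c]++Q = P++b::a::c::Q from by simp] at hv
    obtain ⟨vp, vq, C1, C2, C3, h0, h1', h2', hveq, hvp, hg1, hg2, hg3, hA, hB, hC⟩ :=
      lift_setup v P Q b a c hv
    have hcase1 : key C2 < key C1 ∨ C2 = C1 := by
      rw [← hg1, ← hg2]
      exact key_cases hkey (by rw [← hA, ← hB]; omega)
    have hcase2 : key C1 < key C3 ∨ C1 = C3 := by
      rw [← hg1, ← hg3]
      exact key_cases hkey (by rw [← hA, ← hC]; omega)
    have hC23 : C2 ≠ C3 := by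
      intro hE
      rcases hcase1 with hK1 | hE1 <;> rcases hcase2 with hK2 | hE2
      · rw [hE] at hK1; omega
      · rw [hE, ← hE2] at hK1; omega
      · rw [← hE1, hE] at hK2; omega
      · -- all equal
        have ht : (v.get ⟨P.length, h0⟩).2 = true :=
          bar_true_of_lab_gt (i := ⟨P.length, h0⟩) (j := ⟨P.length+1, h1'⟩)
            (by rw [hg1, hg2, hE1]) (Fin.mk_lt_mk.2 (by omega))
            (by rw [← hA, ← hB]; omega)
        have hf : (v.get ⟨P.length+1, h1'⟩).2 = false :=
          bar_false_of_lab_lt (i := ⟨P.length+1, h1'⟩) (j := ⟨P.length+2, h2'⟩)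
            (by rw [hg2, hg3, hE]) (Fin.mk_lt_mk.2 (by omega))
            (by rw [← hB, ← hC]; omega)
        rw [hg1, ← hE1] at ht
        rw [hg2] at hf
        rw [hf] at ht
        exact Bool.false_ne_true ht
    refine ⟨vp ++ C1 :: C3 :: C2 :: vq, ?_, ?_⟩
    · have hv0 : stdz key ((vp++[C1]) ++ C2::C3::vq) = (P++[b]) ++ a::c::Q := by
        rw [show (vp++[C1])++C2::C3::vq = vp++C1::C2::C3::vq from by simp, ← hveq,
          show (P++[b])++a::c::Q = P++b::a::c::Q from by simp]
        exact hv
      have := stdz_swap (vp++[C1]) vq C2 C3 hC23 (P++[b]) Q a c hv0 (by simp [hvp])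
      rw [show (vp++[C1])++C3::C2::vq = vp++C1::C3::C2::vq from by simp] at this
      rw [this]; simp
    · rcases hcase1 with hK1 | hE1
      · rcases hcase2 with hK2 | hE2
        · apply Relation.EqvGen.rel
          exact ⟨vp, vq, [C1, C2, C3], [C1, C3, C2], pW.k2 C2 C1 C3 hK1 hK2,
            by rw [hveq]; simp, by simp⟩
        · -- C1 = C3 : pW.k3, backward
          have hbar : C1.2 = false := by
            have := bar_false_of_lab_lt (i := ⟨P.length, h0⟩) (j := ⟨P.length+2, h2'⟩)
              (by rw [hg1, hg3, hE2]) (Fin.mk_lt_mk.2 (by omega))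
              (by rw [← hA, ← hC]; omega)
            rw [hg1] at this; exact this
          apply Relation.EqvGen.symm
          apply Relation.EqvGen.rel
          exact ⟨vp, vq, [C1, C1, C2], [C1, C2, C1], pW.k3 C2 C1 hbar hK1,
            by rw [← hE2]; simp, by rw [hveq, ← hE2]; simp⟩
      · -- C2 = C1 : pW.k4, forward
        have hkC : key C1 < key C3 := by
          rcases hcase2 with hK2 | hE2
          · exact hK2
          · exact absurd (hE1.trans hE2) hC23
        have hbar : C1.2 = true := by
          have := bar_true_of_lab_gt (i := ⟨P.length, h0⟩) (j := ⟨P.length+1, h1'⟩)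
            (by rw [hg1, hg2, hE1]) (Fin.mk_lt_mk.2 (by omega))
            (by rw [← hA, ← hB]; omega)
          rw [hg1] at this; exact this
        apply Relation.EqvGen.rel
        exact ⟨vp, vq, [C1, C1, C3], [C1, C3, C1], pW.k4 C1 C3 hbar hkC,
          by rw [hveq, hE1]; simp, by rw [hE1]; simp⟩
  | k3 a b h =>
    rw [show P++[b,b,a]++Q = P++b::b::a::Q from by simp] at hv
    obtain ⟨vp, vq, X, Z, Y, h0, h1', h2', hveq, hvp, hgX, hgZ, hgY, hA, hB, hC⟩ :=
      lift_setup v P Q b b a hv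
    exfalso
    have := lab_inj (w := v) hkey (i := ⟨P.length, h0⟩) (j := ⟨P.length+1, h1'⟩)
      (by rw [← hA, ← hB])
    simp only [Fin.mk.injEq] at this
    omega
  | k4 b c h =>
    rw [show P++[c,b,b]++Q = P++c::b::b::Q from by simp] at hv
    obtain ⟨vp, vq, X, Z, Y, h0, h1', h2', hveq, hvp, hgX, hgZ, hgY, hA, hB, hC⟩ :=
      lift_setup v P Q c b b hv
    exfalso
    have := lab_inj (w := v) hkey (i := ⟨P.length+1, h1'⟩) (j := ⟨P.length+2, h2'⟩)
      (by rw [← hB, ← hC])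
    simp only [Fin.mk.injEq] at this
    omega

lemma stepK_lift_bwd (hkey : Function.Injective key) {u u' : List ℕ}
    (h : StepL kWrel u u') (v' : List (Letter N)) (hv : stdz key v' = u') :
    ∃ v, stdz key v = u ∧ ESt (pW N key) v v' := by
  obtain ⟨P, Q, a3, b3, hr, rfl, rfl⟩ := h
  cases hr with
  | k1 a b c h1 h2 =>
    rw [show P++[c,a,b]++Q = P++c::a::b::Q from by simp] at hv
    obtain ⟨vp, vq, Z, X, Y, h0, h1', h2', hveq, hvp, hgZ, hgX, hgY, hA, hB, hC⟩ :=
      lift_setup v' P Q c a b hv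
    have hcase1 : key X < key Y ∨ X = Y := by
      rw [← hgX, ← hgY]
      exact key_cases hkey (by rw [← hB, ← hC]; omega)
    have hcase2 : key Y < key Z ∨ Y = Z := by
      rw [← hgY, ← hgZ]
      exact key_cases hkey (by rw [← hC, ← hA]; omega)
    have hZX : Z ≠ X := by
      intro hE
      rcases hcase1 with hK1 | hE1 <;> rcases hcase2 with hK2 | hE2
      · rw [← hE] at hK1; omega
      · rw [hE2, ← hE] at hK1; omega
      · rw [← hE1, ← hE] at hK2; omega
      · have hf : (v'.get ⟨P.length+1, h1'⟩).2 = false :=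
          bar_false_of_lab_lt (i := ⟨P.length+1, h1'⟩) (j := ⟨P.length+2, h2'⟩)
            (by rw [hgX, hgY, hE1]) (Fin.mk_lt_mk.2 (by omega))
            (by rw [← hB, ← hC]; omega)
        have ht : (v'.get ⟨P.length, h0⟩).2 = true :=
          bar_true_of_lab_gt (i := ⟨P.length, h0⟩) (j := ⟨P.length+1, h1'⟩)
            (by rw [hgZ, hgX, hE]) (Fin.mk_lt_mk.2 (by omega))
            (by rw [← hA, ← hB]; omega)
        rw [hgX] at hf
        rw [hgZ, hE] at ht
        rw [hf] at ht
        exact Bool.false_ne_true ht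
    refine ⟨vp ++ X :: Z :: Y :: vq, ?_, ?_⟩
    · have hv0 : stdz key (vp ++ Z::X::(Y::vq)) = P ++ c::a::(b::Q) := by
        rw [← hveq]; exact hv
      have := stdz_swap vp (Y::vq) Z X hZX P (b::Q) c a hv0 hvp.symm
      rw [this]; simp
    · rcases hcase1 with hK1 | hE1
      · rcases hcase2 with hK2 | hE2
        · apply Relation.EqvGen.rel
          exact ⟨vp, vq, [X, Z, Y], [Z, X, Y], pW.k1 X Y Z hK1 hK2,
            by simp, by rw [hveq]; simp⟩
        · -- Y = Z : pW.k4b, forward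
          have hbar : Z.2 = true := by
            have := bar_true_of_lab_gt (i := ⟨P.length, h0⟩) (j := ⟨P.length+2, h2'⟩)
              (by rw [hgZ, hgY, hE2]) (Fin.mk_lt_mk.2 (by omega))
              (by rw [← hA, ← hC]; omega)
            rw [hgZ] at this; exact this
          have hkXZ : key X < key Z := by rw [← hE2]; exact hK1
          apply Relation.EqvGen.rel
          exact ⟨vp, vq, [X, Z, Z], [Z, X, Z], pW.k4b X Z hbar hkXZ,
            by rw [hE2]; simp, by rw [hveq, hE2]; simp⟩
      · -- X = Y : pW.k3b, backward
        have hkXZ : key X < key Z := by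
          rcases hcase2 with hK2 | hE2
          · rw [hE1]; exact hK2
          · exact absurd (hE2 ▸ hE1 : X = Z) (fun he => hZX he.symm)
        have hbar : X.2 = false := by
          have := bar_false_of_lab_lt (i := ⟨P.length+1, h1'⟩) (j := ⟨P.length+2, h2'⟩)
            (by rw [hgX, hgY, hE1]) (Fin.mk_lt_mk.2 (by omega))
            (by rw [← hB, ← hC]; omega)
          rw [hgX] at this; exact this
        apply Relation.EqvGen.symm
        apply Relation.EqvGen.rel
        exact ⟨vp, vq, [Z, X, X], [X, Z, X], pW.k3b X Z hbar hkXZ,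
          by rw [hveq, hE1]; simp, by rw [hE1]; simp⟩
  | k2 a b c h1 h2 =>
    rw [show P++[b,c,a]++Q = P++b::c::a::Q from by simp] at hv
    obtain ⟨vp, vq, C1, C2, C3, h0, h1', h2', hveq, hvp, hg1, hg2, hg3, hA, hB, hC⟩ :=
      lift_setup v' P Q b c a hv
    have hcase1 : key C3 < key C1 ∨ C3 = C1 := by
      rw [← hg1, ← hg3]
      exact key_cases hkey (by rw [← hC, ← hA]; omega)
    have hcase2 : key C1 < key C2 ∨ C1 = C2 := by
      rw [← hg1, ← hg2]
      exact key_cases hkey (by rw [← hA, ← hB]; omega)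
    have hC23 : C2 ≠ C3 := by
      intro hE
      rcases hcase1 with hK1 | hE1 <;> rcases hcase2 with hK2 | hE2
      · rw [← hE] at hK1; omega
      · rw [hE2, ← hE] at hK1; omega
      · rw [← hE1, ← hE] at hK2; omega
      · have hf : (v'.get ⟨P.length, h0⟩).2 = false :=
          bar_false_of_lab_lt (i := ⟨P.length, h0⟩) (j := ⟨P.length+1, h1'⟩)
            (by rw [hg1, hg2, hE2]) (Fin.mk_lt_mk.2 (by omega))
            (by rw [← hA, ← hB]; omega)
        have ht : (v'.get ⟨P.length+1, h1'⟩).2 = true :=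
          bar_true_of_lab_gt (i := ⟨P.length+1, h1'⟩) (j := ⟨P.length+2, h2'⟩)
            (by rw [hg2, hg3, hE]) (Fin.mk_lt_mk.2 (by omega))
            (by rw [← hB, ← hC]; omega)
        rw [hg1, hE2] at hf
        rw [hg2] at ht
        rw [hf] at ht
        exact Bool.false_ne_true ht
    refine ⟨vp ++ C1 :: C3 :: C2 :: vq, ?_, ?_⟩
    · have hv0 : stdz key ((vp++[C1]) ++ C2::C3::vq) = (P++[b]) ++ c::a::Q := by
        rw [show (vp++[C1])++C2::C3::vq = vp++C1::C2::C3::vq from by simp, ← hveq,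
          show (P++[b])++c::a::Q = P++b::c::a::Q from by simp]
        exact hv
      have := stdz_swap (vp++[C1]) vq C2 C3 hC23 (P++[b]) Q c a hv0 (by simp [hvp])
      rw [show (vp++[C1])++C3::C2::vq = vp++C1::C3::C2::vq from by simp] at this
      rw [this]; simp
    · rcases hcase1 with hK1 | hE1
      · rcases hcase2 with hK2 | hE2
        · apply Relation.EqvGen.rel
          exact ⟨vp, vq, [C1, C3, C2], [C1, C2, C3], pW.k2 C3 C1 C2 hK1 hK2,
            by simp, by rw [hveq]; simp⟩
        · -- C1 = C2 : pW.k3, backward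
          have hbar : C1.2 = false := by
            have := bar_false_of_lab_lt (i := ⟨P.length, h0⟩) (j := ⟨P.length+1, h1'⟩)
              (by rw [hg1, hg2, hE2]) (Fin.mk_lt_mk.2 (by omega))
              (by rw [← hA, ← hB]; omega)
            rw [hg1] at this; exact this
          apply Relation.EqvGen.symm
          apply Relation.EqvGen.rel
          exact ⟨vp, vq, [C1, C1, C3], [C1, C3, C1], pW.k3 C3 C1 hbar hK1,
            by rw [hveq, ← hE2]; simp, by rw [← hE2]; simp⟩
      · -- C3 = C1 : pW.k4, forward
        have hkC : key C1 < key C2 := by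
          rcases hcase2 with hK2 | hE2
          · exact hK2
          · exact absurd (hE2.symm.trans hE1.symm : C2 = C3) hC23
        have hbar : C1.2 = true := by
          have := bar_true_of_lab_gt (i := ⟨P.length, h0⟩) (j := ⟨P.length+2, h2'⟩)
            (by rw [hg1, hg3, hE1]) (Fin.mk_lt_mk.2 (by omega))
            (by rw [← hA, ← hC]; omega)
          rw [hg1] at this; exact this
        apply Relation.EqvGen.rel
        exact ⟨vp, vq, [C1, C1, C2], [C1, C2, C1], pW.k4 C1 C2 hbar hkC,
          by rw [hE1]; simp, by rw [hveq, hE1]; simp⟩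
  | k3 a b h =>
    rw [show P++[b,a,b]++Q = P++b::a::b::Q from by simp] at hv
    obtain ⟨vp, vq, X, Z, Y, h0, h1', h2', hveq, hvp, hgX, hgZ, hgY, hA, hB, hC⟩ :=
      lift_setup v' P Q b a b hv
    exfalso
    have := lab_inj (w := v') hkey (i := ⟨P.length, h0⟩) (j := ⟨P.length+2, h2'⟩)
      (by rw [← hA, ← hC])
    simp only [Fin.mk.injEq] at this
    omega
  | k4 b c h =>
    rw [show P++[b,c,b]++Q = P++b::c::b::Q from by simp] at hv
    obtain ⟨vp, vq, X, Z, Y, h0, h1', h2', hveq, hvp, hgX, hgZ, hgY, hA, hB, hC⟩ :=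
      lift_setup v' P Q b c b hv
    exfalso
    have := lab_inj (w := v') hkey (i := ⟨P.length, h0⟩) (j := ⟨P.length+2, h2'⟩)
      (by rw [← hA, ← hC])
    simp only [Fin.mk.injEq] at this
    omega

/-- Lifting of Knuth equivalences along standardization. -/
lemma ESt_lift (hkey : Function.Injective key) {u u' : List ℕ} (h : ESt kWrel u u') :
    (∀ v : List (Letter N), stdz key v = u →
      ∃ v', stdz key v' = u' ∧ ESt (pW N key) v v') ∧
    (∀ v' : List (Letter N), stdz key v' = u' →
      ∃ v, stdz key v = u ∧ ESt (pW N key) v v') := by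
  induction h with
  | rel x y hxy =>
    exact ⟨fun v hv => stepK_lift_fwd hkey hxy v hv, fun v' hv => stepK_lift_bwd hkey hxy v' hv⟩
  | refl x =>
    exact ⟨fun v hv => ⟨v, hv, ESt.refl _ v⟩, fun v hv => ⟨v, hv, ESt.refl _ v⟩⟩
  | symm x y _ ih =>
    exact ⟨fun v hv => (ih.2 v hv).imp (fun v' hp => ⟨hp.1, ESt.symm _ hp.2⟩),
      fun v hv => (ih.1 v hv).imp (fun v' hp => ⟨hp.1, ESt.symm _ hp.2⟩)⟩
  | trans x y z _ _ ih1 ih2 =>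
    constructor
    · intro v hv
      obtain ⟨v1, hv1, hp1⟩ := ih1.1 v hv
      obtain ⟨v2, hv2, hp2⟩ := ih2.1 v1 hv1
      exact ⟨v2, hv2, ESt.trans _ hp1 hp2⟩
    · intro v hv
      obtain ⟨v1, hv1, hp1⟩ := ih2.2 v hv
      obtain ⟨v2, hv2, hp2⟩ := ih1.2 v1 hv1
      exact ⟨v2, hv2, ESt.trans _ hp2 hp1⟩

end Lift

section Chain

variable {key : Letter N → ℕ}

lemma ESt_stdz {v v' : List (Letter N)} (h : ESt (pW N key) v v') :
    ESt kWrel (stdz key v) (stdz key v') := by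
  induction h with
  | rel x y hxy =>
    obtain ⟨p, q, a, b, hr, rfl, rfl⟩ := hxy
    exact stepP_to_EStK key hr p q
  | refl x => exact ESt.refl _ _
  | symm x y _ ih => exact ESt.symm _ ih
  | trans x y z _ _ ih1 ih2 => exact ESt.trans _ ih1 ih2

lemma ESt_bwd (hkey : Function.Injective key) {u v : List (Letter N)}
    (hcu : ∀ c, u.count c = v.count c)
    (h : ESt kWrel (stdz key u) (stdz key v)) : ESt (pW N key) u v := by
  obtain ⟨v'', hs, hp⟩ := (ESt_lift hkey h).1 u rfl
  have hcount : ∀ c, v''.count c = v.count c := by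
    intro c
    rw [← ESt_pW_count key hp c]
    exact hcu c
  rw [stdz_inj_of_content hkey v'' v hcount hs] at hp
  exact hp

end Chain


end NCS
namespace NCS

/-- Standardization induces a `ℤ`-module isomorphism from the
colored-content-`β` component of the ⋖-colored plactic algebra onto the span of
the standardized words `S(β)` in the ordinary plactic algebra; in particular
the standardization of a ⋖-colored plactic class is a Knuth class. -/
theorem standardization_isomorphism (N : ℕ) (key : Letter N → ℕ)
    (hkey : IsShuffleKey key) (β : Letter N → ℕ) :
    ∃ φ : (Submodule.span ℤ {q : RingQuot (placRel N key) |
            ∃ w : List (Letter N), (∀ x, w.count x = β x) ∧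
              q = RingQuot.mkRingHom (placRel N key) (wrd w)}) ≃ₗ[ℤ]
          (Submodule.span ℤ {q : RingQuot knuthRel |
            ∃ w : List (Letter N), (∀ x, w.count x = β x) ∧
              q = RingQuot.mkRingHom knuthRel (wrdO (stdz key w))}),
      (∀ (w : List (Letter N)) (hw : ∀ x, w.count x = β x),
        φ ⟨RingQuot.mkRingHom (placRel N key) (wrd w),
            Submodule.subset_span ⟨w, hw, rfl⟩⟩ =
          ⟨RingQuot.mkRingHom knuthRel (wrdO (stdz key w)),
            Submodule.subset_span ⟨w, hw, rfl⟩⟩) ∧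
      (∀ w : List (Letter N), (∀ x, w.count x = β x) →
        ∀ u : List ℕ,
          RingQuot.mkRingHom knuthRel (wrdO u) =
            RingQuot.mkRingHom knuthRel (wrdO (stdz key w)) →
          ∃ v : List (Letter N), (∀ x, v.count x = β x) ∧ stdz key v = u) := by
  classical
  obtain ⟨hki, -, -⟩ := hkey
  set SP : Set (RingQuot (placRel N key)) :=
    {q | ∃ w : List (Letter N), (∀ x, w.count x = β x) ∧
      q = RingQuot.mkRingHom (placRel N key) (wrd w)} with hSP
  set SK : Set (RingQuot knuthRel) :=
    {q | ∃ w : List (Letter N), (∀ x, w.count x = β x) ∧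
      q = RingQuot.mkRingHom knuthRel (wrdO (stdz key w))} with hSK
  -- chosen representatives
  have wPspec : ∀ i : ↥SP, (∀ x, (i.2.choose).count x = β x) ∧
      i.1 = RingQuot.mkRingHom (placRel N key) (wrd i.2.choose) := fun i => i.2.choose_spec
  have wKspec : ∀ j : ↥SK, (∀ x, (j.2.choose).count x = β x) ∧
      j.1 = RingQuot.mkRingHom knuthRel (wrdO (stdz key j.2.choose)) := fun j => j.2.choose_spec
  -- the bijection on generators
  have hfmem : ∀ i : ↥SP,
      RingQuot.mkRingHom knuthRel (wrdO (stdz key i.2.choose)) ∈ SK :=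
    fun i => ⟨i.2.choose, (wPspec i).1, rfl⟩
  set f : ↥SP → ↥SK := fun i => ⟨_, hfmem i⟩ with hf
  have hcontent2 : ∀ (i i' : ↥SP) (c : Letter N),
      (i.2.choose).count c = (i'.2.choose).count c := by
    intro i i' c
    rw [(wPspec i).1 c, (wPspec i').1 c]
  have finj : Function.Injective f := by
    intro i i' hii
    have h1 : RingQuot.mkRingHom knuthRel (wrdO (stdz key i.2.choose))
        = RingQuot.mkRingHom knuthRel (wrdO (stdz key i'.2.choose)) :=
      congrArg Subtype.val hii
    have h2 := (mkK_eq_iff _ _).1 h1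
    have h3 := ESt_bwd hki (hcontent2 i i') h2
    have h4 := (mkP_eq_iff key _ _).2 h3
    apply Subtype.ext
    rw [(wPspec i).2, (wPspec i').2, h4]
  have fsurj : Function.Surjective f := by
    intro j
    have hmem : RingQuot.mkRingHom (placRel N key) (wrd j.2.choose) ∈ SP :=
      ⟨j.2.choose, (wKspec j).1, rfl⟩
    set i : ↥SP := ⟨_, hmem⟩ with hi
    refine ⟨i, ?_⟩
    apply Subtype.ext
    have h1 : RingQuot.mkRingHom (placRel N key) (wrd i.2.choose)
        = RingQuot.mkRingHom (placRel N key) (wrd j.2.choose) :=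
      ((wPspec i).2).symm
    have h2 := ESt_stdz ((mkP_eq_iff key _ _).1 h1)
    have h3 := (mkK_eq_iff _ _).2 h2
    show RingQuot.mkRingHom knuthRel (wrdO (stdz key i.2.choose)) = j.1
    rw [h3, ← (wKspec j).2]
  set e : ↥SP ≃ ↥SK := Equiv.ofBijective f ⟨finj, fsurj⟩ with he
  -- linear independence
  set gP := (alphaG (pW N key) (placRel N key) (placRel_exists key)).toAddMonoidHom.toIntLinearMap
    with hgP
  set gK := (alphaG kWrel knuthRel knuthRel_exists).toAddMonoidHom.toIntLinearMap with hgK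
  have hgPval : ∀ i : ↥SP, gP i.1 =
      MonoidAlgebra.single ((stepCon (pW N key)).mk' (FreeMonoid.ofList i.2.choose)) (1:ℤ) := by
    intro i
    show (alphaG (pW N key) (placRel N key) (placRel_exists key)) i.1 = _
    have hc := congrArg (alphaG (pW N key) (placRel N key) (placRel_exists key)) (wPspec i).2
    rw [hc, wrd_eq_wm]
    exact alphaG_wm _ _ _ _
  have hgKval : ∀ j : ↥SK, gK j.1 =
      MonoidAlgebra.single ((stepCon kWrel).mk' (FreeMonoid.ofList (stdz key j.2.choose))) (1:ℤ) := by
    intro j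
    show (alphaG kWrel knuthRel knuthRel_exists) j.1 = _
    have hc := congrArg (alphaG kWrel knuthRel knuthRel_exists) (wKspec j).2
    rw [hc, wrdO_eq_wm]
    exact alphaG_wm _ _ _ _
  have clsPinj : Function.Injective
      (fun i : ↥SP => (stepCon (pW N key)).mk' (FreeMonoid.ofList i.2.choose)) := by
    intro i i' hcl
    have h1 : (stepCon (pW N key)) (FreeMonoid.ofList i.2.choose)
        (FreeMonoid.ofList i'.2.choose) := (Con.eq _).1 hcl
    have h2 : ESt (pW N key) i.2.choose i'.2.choose := by
      have := h1
      show ESt (pW N key) _ _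
      rw [← FreeMonoid.toList_ofList (i.2.choose), ← FreeMonoid.toList_ofList (i'.2.choose)]
      exact this
    apply Subtype.ext
    rw [(wPspec i).2, (wPspec i').2]
    exact (mkP_eq_iff key _ _).2 h2
  have clsKinj : Function.Injective
      (fun j : ↥SK => (stepCon kWrel).mk' (FreeMonoid.ofList (stdz key j.2.choose))) := by
    intro j j' hcl
    have h1 : (stepCon kWrel) (FreeMonoid.ofList (stdz key j.2.choose))
        (FreeMonoid.ofList (stdz key j'.2.choose)) := (Con.eq _).1 hcl
    have h2 : ESt kWrel (stdz key j.2.choose) (stdz key j'.2.choose) := by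
      show ESt kWrel _ _
      rw [← FreeMonoid.toList_ofList (stdz key j.2.choose),
        ← FreeMonoid.toList_ofList (stdz key j'.2.choose)]
      exact h1
    apply Subtype.ext
    rw [(wKspec j).2, (wKspec j').2]
    exact (mkK_eq_iff _ _).2 h2
  have liP : LinearIndependent ℤ (fun i : ↥SP => i.1) := by
    apply LinearIndependent.of_comp gP
    have h1 : LinearIndependent ℤ (fun i : ↥SP => MonoidAlgebra.single
        ((stepCon (pW N key)).mk' (FreeMonoid.ofList i.2.choose)) (1:ℤ)) := by
      have h0 := (MonoidAlgebra.basis (stepCon (pW N key)).Quotient ℤ).linearIndependent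
      have h2 := h0.comp _ clsPinj
      rw [Subsingleton.elim (α := Module ℤ (MonoidAlgebra ℤ (stepCon (pW N key)).Quotient))
        (AddCommGroup.toIntModule _) MonoidAlgebra.instModule]
      exact h2
    have h2 : (⇑gP ∘ fun i : ↥SP => i.1) = fun i : ↥SP => MonoidAlgebra.single
        ((stepCon (pW N key)).mk' (FreeMonoid.ofList i.2.choose)) (1:ℤ) :=
      funext hgPval
    rw [h2]
    exact h1
  have liK : LinearIndependent ℤ (fun j : ↥SK => j.1) := by
    apply LinearIndependent.of_comp gK
    have h1 : LinearIndependent ℤ (fun j : ↥SK => MonoidAlgebra.single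
        ((stepCon kWrel).mk' (FreeMonoid.ofList (stdz key j.2.choose))) (1:ℤ)) := by
      have h0 := (MonoidAlgebra.basis (stepCon kWrel).Quotient ℤ).linearIndependent
      have h2 := h0.comp _ clsKinj
      rw [Subsingleton.elim (α := Module ℤ (MonoidAlgebra ℤ (stepCon kWrel).Quotient))
        (AddCommGroup.toIntModule _) MonoidAlgebra.instModule]
      exact h2
    have h2 : (⇑gK ∘ fun j : ↥SK => j.1) = fun j : ↥SK => MonoidAlgebra.single
        ((stepCon kWrel).mk' (FreeMonoid.ofList (stdz key j.2.choose))) (1:ℤ) :=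
      funext hgKval
    rw [h2]
    exact h1
  set bP := Module.Basis.span liP with hbP
  set bK := Module.Basis.span liK with hbK
  have eqSpanP : Submodule.span ℤ (Set.range fun i : ↥SP => i.1) = Submodule.span ℤ SP := by
    rw [Subtype.range_val]
  have eqSpanK : Submodule.span ℤ (Set.range fun j : ↥SK => j.1) = Submodule.span ℤ SK := by
    rw [Subtype.range_val]
  set φ : (Submodule.span ℤ SP) ≃ₗ[ℤ] (Submodule.span ℤ SK) :=
    (LinearEquiv.ofEq _ _ eqSpanP.symm).trans
      ((bP.equiv bK e).trans (LinearEquiv.ofEq _ _ eqSpanK)) with hphi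
  refine ⟨φ, ?_, ?_⟩
  · intro w hw
    set i : ↥SP := ⟨RingQuot.mkRingHom (placRel N key) (wrd w), ⟨w, hw, rfl⟩⟩ with hi
    have step1 : (LinearEquiv.ofEq _ _ eqSpanP.symm)
        ⟨RingQuot.mkRingHom (placRel N key) (wrd w), Submodule.subset_span ⟨w, hw, rfl⟩⟩
        = bP i := by
      apply Subtype.ext
      rw [Module.Basis.span_apply]
      rfl
    have step2 : (bP.equiv bK e) (bP i) = bK (e i) := bP.equiv_apply i bK e
    have step3 : ((LinearEquiv.ofEq _ _ eqSpanK) (bK (e i)) : RingQuot knuthRel)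
        = RingQuot.mkRingHom knuthRel (wrdO (stdz key w)) := by
      have h1 : ((bK (e i) : Submodule.span ℤ (Set.range fun j : ↥SK => j.1)) :
          RingQuot knuthRel) = (e i).1 := congrArg Subtype.val (Module.Basis.span_apply liK (e i))
      have h2 : (e i).1 = RingQuot.mkRingHom knuthRel (wrdO (stdz key i.2.choose)) := rfl
      have h3 : RingQuot.mkRingHom knuthRel (wrdO (stdz key i.2.choose))
          = RingQuot.mkRingHom knuthRel (wrdO (stdz key w)) := by
        have hP : RingQuot.mkRingHom (placRel N key) (wrd i.2.choose)
            = RingQuot.mkRingHom (placRel N key) (wrd w) := ((wPspec i).2).symm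
        exact (mkK_eq_iff _ _).2 (ESt_stdz ((mkP_eq_iff key _ _).1 hP))
      show ((bK (e i)).1 : RingQuot knuthRel) = _
      rw [h1, h2, h3]
    apply Subtype.ext
    show (φ _ : RingQuot knuthRel) = RingQuot.mkRingHom knuthRel (wrdO (stdz key w))
    rw [hphi]
    simp only [LinearEquiv.trans_apply]
    rw [step1, step2]
    exact step3
  · intro w hw u hu
    have h1 : ESt kWrel u (stdz key w) := (mkK_eq_iff _ _).1 hu
    obtain ⟨v, hsv, hpv⟩ := (ESt_lift hki h1).2 w rfl
    refine ⟨v, ?_, hsv⟩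
    intro x
    rw [ESt_pW_count key hpv x]
    exact hw x


end NCS
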